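/- arXiv:2512.14547 — 3 statements merged into one kernel-verified Lean document; each statement's English description precedes it below -/
import Mathlib

section
/- Each γ ∈ Ĥ_i can be written uniquely in the form γ = Σ_{a=2}^{(p−1)/2} c_a ϑ_a with coefficients c_a ∈ K satisfying val(c_a) ≥ 5 − p. -/
/-!
Setting: `p ≥ 5` prime, `K = ℚ_p(θ)` with `θ` a primitive `p`-th root of unity,
`O` the ring of integers (maximal order) of `K`, i.e. the integral closure of
`ℤ_p` in `K`, and `𝔭` its unique maximal ideal, generated by `κ = θ - 1`,
so that `𝔭^n = κ^n · O` (also for `n : ℤ`).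
-/

set_option linter.unusedSectionVars false
set_option linter.unusedTactic false

/-- The maximal order `O` of `K`: the integral closure of `ℤ_p` in `K`. -/
noncomputable def RO (p : ℕ) [Fact p.Prime] (K : Type) [Field K] [Algebra ℤ_[p] K] :
    Subalgebra ℤ_[p] K :=
  integralClosure ℤ_[p] K

/-- The ideal `𝔭^n = κ^n · O` (for `n : ℤ`), where `κ = θ - 1`;
membership `x ∈ 𝔭^n` is encoded as `κ^(-n) * x ∈ O`. -/
def Pp (p : ℕ) [Fact p.Prime] (K : Type) [Field K] [Algebra ℤ_[p] K]
    (θ : K) (n : ℤ) : Submodule ℤ_[p] K where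
  carrier := {x : K | (θ - 1) ^ (-n) * x ∈ RO p K}
  add_mem' := by
    intro a b ha hb
    simp only [Set.mem_setOf_eq, mul_add] at *
    exact add_mem ha hb
  zero_mem' := by
    simp only [Set.mem_setOf_eq, mul_zero]
    exact zero_mem _
  smul_mem' := by
    intro c x hx
    simp only [Set.mem_setOf_eq, Algebra.smul_def] at *
    rw [mul_left_comm]
    exact mul_mem (Subalgebra.algebraMap_mem _ c) hx

open scoped Classical in
/-- The valuation `val : K → ℤ ∪ {∞}` with `val κ = 1`:
`val x = n` iff `x ∈ 𝔭^n \ 𝔭^(n+1)`, and `val 0 = ∞`. -/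
noncomputable def valK (p : ℕ) [Fact p.Prime] (K : Type) [Field K]
    [Algebra ℤ_[p] K] (θ : K) (x : K) : WithTop ℤ :=
  if h : ∃ z : ℤ, x ∈ Pp p K θ z ∧ x ∉ Pp p K θ (z + 1) then (h.choose : ℤ) else ⊤

namespace S3
open Finset Polynomial

variable {p : ℕ} [hpf : Fact p.Prime] {K : Type} [Field K] [Algebra ℤ_[p] K] {θ : K}

section basics
variable (hθ : IsPrimitiveRoot θ p)

lemma ppos : 0 < p := hpf.out.pos

include hθ

lemma theta_pow_p : θ ^ p = 1 := hθ.pow_eq_one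

lemma theta_ne_zero : θ ≠ 0 := by
  intro h
  have := hθ.pow_eq_one
  rw [h, zero_pow hpf.out.pos.ne'] at this
  exact zero_ne_one this

lemma theta_ne_one : θ ≠ 1 := hθ.ne_one hpf.out.one_lt

lemma kappa_ne_zero : θ - 1 ≠ 0 := sub_ne_zero_of_ne (theta_ne_one hθ)

lemma theta_mem : θ ∈ RO p K := by
  refine ⟨X ^ p - C 1, monic_X_pow_sub_C 1 hpf.out.pos.ne', ?_⟩
  simp [theta_pow_p hθ]

lemma theta_pow_mem (s : ℕ) : θ ^ s ∈ RO p K := pow_mem (theta_mem hθ) s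

lemma kappa_mem : θ - 1 ∈ RO p K := sub_mem (theta_mem hθ) (one_mem _)

lemma theta_pow_mod (m : ℕ) : θ ^ m = θ ^ (m % p) := by
  conv_lhs => rw [← Nat.mod_add_div m p, pow_add, pow_mul, theta_pow_p hθ, one_pow, mul_one]

lemma theta_pow_congr {m n : ℕ} (h : m % p = n % p) : θ ^ m = θ ^ n := by
  rw [theta_pow_mod hθ m, theta_pow_mod hθ n, h]

end basics

section pp
variable (hθ : IsPrimitiveRoot θ p)

lemma mem_Pp {n : ℤ} {x : K} : x ∈ Pp p K θ n ↔ (θ - 1) ^ (-n) * x ∈ RO p K := Iff.rfl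

include hθ

lemma Pp_mul {m n : ℤ} {x y : K} (hx : x ∈ Pp p K θ m) (hy : y ∈ Pp p K θ n) :
    x * y ∈ Pp p K θ (m + n) := by
  rw [mem_Pp] at *
  have : (θ - 1) ^ (-(m + n)) * (x * y) = ((θ-1) ^ (-m) * x) * ((θ-1) ^ (-n) * y) := by
    rw [neg_add, zpow_add₀ (kappa_ne_zero hθ)]; ring
  rw [this]
  exact mul_mem hx hy

omit hθ in
lemma mem_Pp_zero {x : K} : x ∈ Pp p K θ 0 ↔ x ∈ RO p K := by
  rw [mem_Pp]; simp

lemma RO_mul_Pp {w x : K} {n : ℤ} (hw : w ∈ RO p K) (hx : x ∈ Pp p K θ n) :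
    w * x ∈ Pp p K θ n := by
  have := Pp_mul hθ ((mem_Pp_zero (p:=p)).mpr hw) hx
  rwa [zero_add] at this

lemma Pp_mono {m n : ℤ} (h : n ≤ m) {x : K} (hx : x ∈ Pp p K θ m) : x ∈ Pp p K θ n := by
  rw [mem_Pp] at *
  have e : (θ - 1) ^ (-n) * x = (θ-1) ^ ((m - n).toNat) * ((θ-1) ^ (-m) * x) := by
    rw [← mul_assoc, ← zpow_natCast (θ-1) (m-n).toNat, Int.toNat_of_nonneg (by omega),
      ← zpow_add₀ (kappa_ne_zero hθ)]
    ring_nf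
  rw [e]
  exact mul_mem (pow_mem (kappa_mem hθ) _) hx

lemma kappa_pow_mul_mem {n : ℤ} {k : ℕ} {x : K} (hx : x ∈ Pp p K θ n) :
    (θ - 1) ^ k * x ∈ Pp p K θ (n + k) := by
  have hk : (θ-1)^k ∈ Pp p K θ k := by
    rw [mem_Pp, ← zpow_natCast (θ-1) k, ← zpow_add₀ (kappa_ne_zero hθ)]
    simpa using one_mem (RO p K)
  have := Pp_mul hθ hk hx
  rwa [add_comm] at this

lemma mem_of_kappa_pow_mul_mem {n : ℤ} {k : ℕ} {x : K}
    (h : (θ - 1) ^ k * x ∈ Pp p K θ (n + k)) : x ∈ Pp p K θ n := by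
  rw [mem_Pp] at *
  have e : (θ - 1) ^ (-(n + (k:ℤ))) * ((θ-1)^k * x) = (θ-1)^(-n) * x := by
    rw [← zpow_natCast (θ-1) k, ← mul_assoc, ← zpow_add₀ (kappa_ne_zero hθ)]
    ring_nf
  rwa [e] at h

lemma X_mem (i : ℕ) (s : ℕ) : (θ - 1) ^ i * θ ^ s ∈ Pp p K θ i := by
  have : (θ:K)^s ∈ Pp p K θ 0 := (mem_Pp_zero (p:=p)).mpr (theta_pow_mem hθ s)
  have := kappa_pow_mul_mem hθ (k := i) this
  rwa [zero_add] at this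

lemma Pp_pow {n : ℤ} {x : K} (hx : x ∈ Pp p K θ n) (k : ℕ) : x ^ k ∈ Pp p K θ (k * n) := by
  induction k with
  | zero =>
      have : (x:K)^0 = 1 := pow_zero x
      rw [this]
      simpa [mem_Pp] using one_mem (RO p K)
  | succ k ih =>
      have := Pp_mul hθ ih hx
      have e : (k:ℤ) * n + n = ((k+1 : ℕ) : ℤ) * n := by push_cast; ring
      rw [e] at this
      simpa [pow_succ] using this

end pp

section units
open Finset Polynomial
variable (hθ : IsPrimitiveRoot θ p)
include hθ

lemma exists_inv_exp {a : ℕ} (ha : ¬ p ∣ a) : ∃ b : ℕ, a * b % p = 1 % p := by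
  haveI : NeZero p := ⟨hpf.out.pos.ne'⟩
  have h0 : (a : ZMod p) ≠ 0 := by
    rw [Ne, ZMod.natCast_eq_zero_iff]
    exact ha
  refine ⟨((a : ZMod p)⁻¹).val, ?_⟩
  have : ((a * ((a : ZMod p)⁻¹).val : ℕ) : ZMod p) = ((1 : ℕ) : ZMod p) := by
    push_cast
    rw [ZMod.natCast_val, ZMod.cast_id]
    field_simp
  exact (ZMod.natCast_eq_natCast_iff _ _ _).mp this

omit hθ in
lemma not_dvd_of_lt {a : ℕ} (h1 : 1 ≤ a) (h2 : a < p) : ¬ p ∣ a :=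
  fun hd => absurd (Nat.le_of_dvd (by omega) hd) (by omega)

lemma geom_unit {a : ℕ} (ha : ¬ p ∣ a) :
    ∃ g ∈ RO p K, (θ ^ a - 1) * g = θ - 1 := by
  obtain ⟨b, hb⟩ := exists_inv_exp hθ ha
  refine ⟨∑ k ∈ range b, (θ^a)^k, sum_mem (fun k _ => ?_), ?_⟩
  · rw [← pow_mul]
    exact theta_pow_mem hθ _
  · rw [mul_geom_sum, ← pow_mul, theta_pow_congr hθ hb, pow_one]

lemma theta_pow_sub_one_ne {a : ℕ} (ha : ¬ p ∣ a) : θ ^ a - 1 ≠ 0 := by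
  rw [sub_ne_zero]
  intro h
  exact ha ((hθ.pow_eq_one_iff_dvd a).mp h)

lemma tpso_mem_P1 (a : ℕ) : θ ^ a - 1 ∈ Pp p K θ 1 := by
  rw [mem_Pp]
  have : (θ - 1) ^ (-(1:ℤ)) * (θ^a - 1) = ∑ k ∈ range a, θ^k := by
    rw [zpow_neg_one, ← geom_sum_mul, mul_comm (∑ k ∈ range a, θ^k) (θ-1),
      inv_mul_cancel_left₀ (kappa_ne_zero hθ)]
  rw [this]
  exact sum_mem (fun k _ => theta_pow_mem hθ k)

lemma inv_tpso_mem {a : ℕ} (ha : ¬ p ∣ a) : (θ ^ a - 1)⁻¹ ∈ Pp p K θ (-1) := by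
  obtain ⟨g, hg, hge⟩ := geom_unit hθ ha
  rw [mem_Pp]
  have : (θ - 1) ^ (-(-1:ℤ)) * (θ^a - 1)⁻¹ = g := by
    rw [neg_neg, zpow_one, ← hge, mul_comm (θ^a-1) g,
      mul_inv_cancel_right₀ (theta_pow_sub_one_ne hθ ha)]
  rw [this]; exact hg

lemma prod_one_sub_eq : ∏ a ∈ Ico 1 p, (1 - θ^a) = (p : K) := by
  classical
  have hpos := hpf.out.pos
  have himg : Polynomial.nthRootsFinset p (1:K) = (range p).image (θ ^ ·) := by
    ext x
    simp only [Polynomial.mem_nthRootsFinset hpos (1:K), mem_image, mem_range]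
    constructor
    · intro hx
      haveI : NeZero p := ⟨hpos.ne'⟩
      obtain ⟨i, hi, he⟩ := hθ.eq_pow_of_pow_eq_one hx
      exact ⟨i, hi, he⟩
    · rintro ⟨i, _, rfl⟩
      rw [← pow_mul, mul_comm, pow_mul, theta_pow_p hθ, one_pow]
  have h1 : (X : K[X]) ^ p - 1 = ∏ a ∈ range p, (X - C (θ^a)) := by
    rw [X_pow_sub_one_eq_prod hpos hθ, himg,
      Finset.prod_image (fun i hi j hj hij => hθ.pow_inj (mem_range.mp hi) (mem_range.mp hj) hij)]
  have h2 : ∏ a ∈ range p, ((X:K[X]) - C (θ^a)) = (X - 1) * ∏ a ∈ Ico 1 p, (X - C (θ^a)) := by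
    rw [range_eq_Ico, Finset.prod_eq_prod_Ico_succ_bot hpos]
    simp
  have h3 : (∑ k ∈ range p, (X:K[X])^k) * (X - 1) = (X - 1) * ∏ a ∈ Ico 1 p, (X - C (θ^a)) := by
    rw [geom_sum_mul, h1, h2]
  have h4 : (∑ k ∈ range p, (X:K[X])^k) = ∏ a ∈ Ico 1 p, (X - C (θ^a)) := by
    have hX1 : (X - 1 : K[X]) ≠ 0 := by
      intro h
      have := Polynomial.natDegree_X_sub_C (1:K)
      rw [← Polynomial.C_1] at h
      rw [h] at this
      simp at this
    apply mul_right_cancel₀ hX1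
    rw [h3, mul_comm]
  have h5 := congrArg (Polynomial.eval (1:K)) h4
  simp only [Polynomial.eval_finset_sum, Polynomial.eval_prod, Polynomial.eval_sub,
    Polynomial.eval_pow, Polynomial.eval_X, Polynomial.eval_C, Polynomial.eval_one,
    one_pow, Finset.sum_const, card_range, nsmul_eq_mul, mul_one] at h5
  exact h5.symm

lemma pK_ne_zero : ((p:ℕ) : K) ≠ 0 := by
  rw [← prod_one_sub_eq hθ]
  apply Finset.prod_ne_zero_iff.mpr
  intro a ha
  rw [mem_Ico] at ha
  have : ¬ p ∣ a := not_dvd_of_lt ha.1 ha.2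
  intro h
  apply theta_pow_sub_one_ne hθ this
  rw [← neg_sub] at h
  simpa using congrArg Neg.neg h

lemma inv_p_mem (hp2 : p ≠ 2) : ((p:ℕ) : K)⁻¹ ∈ Pp p K θ (1 - p) := by
  have H : ∀ a : ℕ, ∃ g, g ∈ RO p K ∧ ((1 ≤ a ∧ a < p) → (1 - θ^a) * g = 1 - θ) := by
    intro a
    by_cases ha : 1 ≤ a ∧ a < p
    · have hnd : ¬ p ∣ a := not_dvd_of_lt ha.1 ha.2
      obtain ⟨g, hg, hge⟩ := geom_unit hθ hnd
      exact ⟨g, hg, fun _ => by rw [← neg_sub (θ^a) 1, neg_mul, hge]; ring⟩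
    · exact ⟨0, zero_mem _, fun h => absurd h ha⟩
  choose g hgmem hgval using H
  have key : (θ - 1) ^ (p - 1) = ((p:ℕ):K) * ∏ a ∈ Ico 1 p, g a := by
    have e1 : (θ - 1) ^ (p - 1) = (1 - θ) ^ (p - 1) := by
      have hev : Even (p - 1) := by
        have := hpf.out.two_le
        have hodd := hpf.out.odd_of_ne_two hp2
        rcases hodd with ⟨k, hk⟩
        exact ⟨k, by omega⟩
      rw [← neg_sub (1:K) θ, hev.neg_pow]
    have e3 : ∏ a ∈ Ico 1 p, ((1 - θ^a) * g a) = ∏ a ∈ Ico 1 p, (1 - θ) := by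
      apply Finset.prod_congr rfl
      intro a ha
      rw [mem_Ico] at ha
      exact hgval a ⟨ha.1, ha.2⟩
    have e4 : ∏ a ∈ Ico 1 p, (1 - θ) = (1 - θ) ^ (p - 1) := by
      rw [Finset.prod_const, Nat.card_Ico]
    rw [e1, ← e4, ← e3, Finset.prod_mul_distrib, prod_one_sub_eq hθ]
  rw [mem_Pp]
  have e2 : (θ-1) ^ (-(1 - (p:ℤ))) * ((p:ℕ):K)⁻¹ = ∏ a ∈ Ico 1 p, g a := by
    have : -(1 - (p:ℤ)) = ((p - 1 : ℕ) : ℤ) := by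
      have := hpf.out.two_le; push_cast; omega
    rw [this, zpow_natCast, key]
    field_simp [pK_ne_zero hθ]
  rw [e2]
  exact prod_mem (fun a _ => hgmem a)

lemma sum_theta_pow (m : ℕ) :
    ∑ s ∈ range p, θ^(m*s) = if p ∣ m then ((p:ℕ):K) else 0 := by
  split_ifs with hm
  · have : ∀ s ∈ range p, θ^(m*s) = 1 := by
      intro s _
      have : (m*s) % p = 0 % p := by
        rcases hm with ⟨c, rfl⟩
        simp [Nat.mul_mod, Nat.mul_mod_right, mul_assoc]
      rw [theta_pow_congr hθ this, pow_zero]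
    rw [Finset.sum_congr rfl this]
    simp
  · have key : (∑ s ∈ range p, (θ^m)^s) * (θ^m - 1) = 0 := by
      rw [geom_sum_mul, ← pow_mul, mul_comm, pow_mul, theta_pow_p hθ, one_pow, sub_self]
    have h2 := mul_eq_zero.mp key
    rcases h2 with h2|h2
    · rw [← h2]
      apply Finset.sum_congr rfl
      intro s _
      rw [pow_mul]
    · exact absurd h2 (theta_pow_sub_one_ne hθ hm)

end units

section zmodcongr
open Finset
variable (hθ : IsPrimitiveRoot θ p)
include hθ

lemma tp_congr {m n : ℕ} (h : (m : ZMod p) = (n : ZMod p)) : θ^m = θ^n :=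
  theta_pow_congr hθ ((ZMod.natCast_eq_natCast_iff _ _ _).mp h)

end zmodcongr
end S3

/-- `γ ∈ H_i`: (the restriction to `𝔭^i × 𝔭^i` of) `γ` is a `ℤ_p`-bilinear
alternating map `𝔭^i × 𝔭^i → 𝔭^(2i+1)` which is `θ`-equivariant for the
diagonal action. -/
structure MemH (p : ℕ) [Fact p.Prime] (K : Type) [Field K] [Algebra ℤ_[p] K]
    (θ : K) (i : ℕ) (γ : K → K → K) : Prop where
  maps_into : ∀ x ∈ Pp p K θ i, ∀ y ∈ Pp p K θ i, γ x y ∈ Pp p K θ (2 * i + 1)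
  add_left : ∀ x ∈ Pp p K θ i, ∀ x' ∈ Pp p K θ i, ∀ y ∈ Pp p K θ i,
    γ (x + x') y = γ x y + γ x' y
  add_right : ∀ x ∈ Pp p K θ i, ∀ y ∈ Pp p K θ i, ∀ y' ∈ Pp p K θ i,
    γ x (y + y') = γ x y + γ x y'
  smul_left : ∀ (c : ℤ_[p]), ∀ x ∈ Pp p K θ i, ∀ y ∈ Pp p K θ i,
    γ (c • x) y = c • γ x y
  smul_right : ∀ (c : ℤ_[p]), ∀ x ∈ Pp p K θ i, ∀ y ∈ Pp p K θ i,
    γ x (c • y) = c • γ x y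
  alternating : ∀ x ∈ Pp p K θ i, γ x x = 0
  theta_equiv : ∀ x ∈ Pp p K θ i, ∀ y ∈ Pp p K θ i, γ (θ * x) (θ * y) = θ * γ x y

namespace S3
open Finset

/-- The basic monomial `κ^i θ^s ∈ 𝔭^i`. -/
def XE {K : Type} [Field K] (θ : K) (i s : ℕ) : K := (θ - 1)^i * θ^s

/-- The Fourier sums `T_c`. -/
def TT (p : ℕ) {K : Type} [Field K] (θ : K) (i : ℕ) (γ : K → K → K) (c : ℕ) : K :=
  ∑ u ∈ range p, θ^(c*u) * γ (XE θ i u) (XE θ i 0)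

variable {p : ℕ} [hpf : Fact p.Prime] {K : Type} [Field K] [Algebra ℤ_[p] K] {θ : K}

section gamma
variable {i : ℕ} {γ : K → K → K}
variable (hθ : IsPrimitiveRoot θ p) (hγ : MemH p K θ i γ)

include hθ

lemma XE_mem (s : ℕ) : XE θ i s ∈ Pp p K θ i := X_mem hθ i s

lemma XE_mod (s : ℕ) : XE θ i s = XE θ i (s % p) := by
  unfold XE
  rw [theta_pow_mod hθ s]

lemma XE_succ (s : ℕ) : XE θ i (s + 1) = θ * XE θ i s := by
  unfold XE
  rw [pow_succ]
  ring

include hγ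

lemma gamma_zero_left {y : K} (hy : y ∈ Pp p K θ i) : γ 0 y = 0 := by
  have h0 : (0:K) ∈ Pp p K θ i := zero_mem _
  have := hγ.smul_left 0 0 h0 y hy
  rwa [zero_smul, zero_smul] at this

lemma gamma_anti {x y : K} (hx : x ∈ Pp p K θ i) (hy : y ∈ Pp p K θ i) :
    γ x y = - γ y x := by
  have hxy : x + y ∈ Pp p K θ i := add_mem hx hy
  have h1 := hγ.alternating _ hxy
  rw [hγ.add_left x hx y hy _ hxy, hγ.add_right x hx x hx y hy, hγ.add_right y hy x hx y hy,
    hγ.alternating x hx, hγ.alternating y hy] at h1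
  linear_combination h1

lemma gamma_sum_left {S : Finset ℕ} {f : ℕ → K} (hf : ∀ s ∈ S, f s ∈ Pp p K θ i)
    {y : K} (hy : y ∈ Pp p K θ i) :
    γ (∑ s ∈ S, f s) y = ∑ s ∈ S, γ (f s) y := by
  classical
  induction S using Finset.induction_on with
  | empty => simpa using gamma_zero_left hθ hγ hy
  | insert _ _ hnot ih =>
      rename_i a S'
      rw [Finset.sum_insert hnot, Finset.sum_insert hnot,
        hγ.add_left _ (hf a (mem_insert_self a S')) _
          (sum_mem (fun s hs => hf s (mem_insert_of_mem hs))) y hy,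
        ih (fun s hs => hf s (mem_insert_of_mem hs))]

lemma gamma_sum_right {S : Finset ℕ} {f : ℕ → K} (hf : ∀ s ∈ S, f s ∈ Pp p K θ i)
    {x : K} (hx : x ∈ Pp p K θ i) :
    γ x (∑ s ∈ S, f s) = ∑ s ∈ S, γ x (f s) := by
  rw [gamma_anti hθ hγ hx (sum_mem hf), gamma_sum_left hθ hγ hf hx, ← Finset.sum_neg_distrib]
  exact Finset.sum_congr rfl (fun s hs => (gamma_anti hθ hγ hx (hf s hs)).symm)

lemma gamma_equiv_pow (k : ℕ) {x y : K} (hx : x ∈ Pp p K θ i) (hy : y ∈ Pp p K θ i) :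
    γ (θ^k * x) (θ^k * y) = θ^k * γ x y := by
  induction k with
  | zero => simp
  | succ k ih =>
      have hx' : θ^k * x ∈ Pp p K θ i := RO_mul_Pp hθ (theta_pow_mem hθ k) hx
      have hy' : θ^k * y ∈ Pp p K θ i := RO_mul_Pp hθ (theta_pow_mem hθ k) hy
      have := hγ.theta_equiv _ hx' _ hy'
      rw [show θ * (θ^k * x) = θ^(k+1) * x by ring, show θ * (θ^k * y) = θ^(k+1) * y by ring]
        at this
      rw [this, ih, pow_succ]
      ring

lemma gamma_red {s t : ℕ} (h : t ≤ s) :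
    γ (XE θ i s) (XE θ i t) = θ^t * γ (XE θ i (s - t)) (XE θ i 0) := by
  have e1 : XE θ i s = θ^t * XE θ i (s - t) := by
    unfold XE
    rw [← mul_assoc, mul_comm (θ^t), mul_assoc, ← pow_add]
    congr 2
    omega
  have e2 : XE θ i t = θ^t * XE θ i 0 := by
    unfold XE
    rw [pow_zero, mul_one, mul_comm]
  rw [e1, e2, gamma_equiv_pow hθ hγ t (XE_mem hθ _) (XE_mem hθ _)]

lemma gamma_sum_zero {y : K} (hy : y ∈ Pp p K θ i) :
    ∑ u ∈ range p, γ (XE θ i u) y = 0 := by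
  rw [← gamma_sum_left hθ hγ (fun s _ => XE_mem hθ s) hy]
  have : ∑ u ∈ range p, XE θ i u = 0 := by
    unfold XE
    rw [← Finset.mul_sum]
    have := sum_theta_pow hθ 1
    rw [if_neg (by exact fun h => Nat.Prime.one_lt hpf.out |>.ne' (Nat.dvd_one.mp h ▸ rfl))] at this
    simp only [one_mul] at this
    rw [this, mul_zero]
  rw [this, gamma_zero_left hθ hγ hy]

lemma gamma_XE_self : γ (XE θ i 0) (XE θ i 0) = 0 := hγ.alternating _ (XE_mem hθ 0)

lemma gamma_hsym {u : ℕ} (hu : u ≤ p) :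
    θ^u * γ (XE θ i (p - u)) (XE θ i 0) = - γ (XE θ i u) (XE θ i 0) := by
  have h1 : γ (XE θ i 0) (XE θ i u) = - γ (XE θ i u) (XE θ i 0) :=
    gamma_anti hθ hγ (XE_mem hθ 0) (XE_mem hθ u)
  have h2 : γ (XE θ i p) (XE θ i u) = θ^u * γ (XE θ i (p - u)) (XE θ i 0) :=
    gamma_red hθ hγ hu
  have h3 : XE θ i p = XE θ i 0 := by
    rw [XE_mod hθ p, Nat.mod_self]
  rw [h3] at h2
  rw [h2] at h1
  exact h1

lemma TT_zero : TT p θ i γ 0 = 0 := by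
  unfold TT
  have e : ∀ u ∈ range p, θ^(0*u) * γ (XE θ i u) (XE θ i 0) = γ (XE θ i u) (XE θ i 0) := by
    intro u _
    rw [Nat.zero_mul, pow_zero, one_mul]
  rw [Finset.sum_congr rfl e]
  exact gamma_sum_zero hθ hγ (XE_mem hθ 0)

lemma TT_pair {c : ℕ} (hc : c ≤ p - 1) : TT p θ i γ c = - TT p θ i γ (p - 1 - c) := by
  have hp1 := hpf.out.one_lt
  unfold TT
  rw [Finset.range_eq_Ico, Finset.sum_eq_sum_Ico_succ_bot hpf.out.pos,
    Finset.sum_eq_sum_Ico_succ_bot hpf.out.pos]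
  rw [gamma_XE_self hθ hγ]
  simp only [mul_zero, zero_add]
  rw [← Finset.sum_neg_distrib]
  apply Finset.sum_nbij' (fun u => p - u) (fun u => p - u)
  · intro u hu
    rw [Finset.mem_Ico] at *
    omega
  · intro u hu
    rw [Finset.mem_Ico] at *
    omega
  · intro u hu
    rw [Finset.mem_Ico] at hu
    omega
  · intro u hu
    rw [Finset.mem_Ico] at hu
    omega
  · intro u hu
    rw [Finset.mem_Ico] at hu
    -- θ^(c*u) γ(XE u)(XE 0) = - (θ^((p-1-c)*(p-u)) * γ (XE (p-u)) (XE 0))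
    have hsym := gamma_hsym hθ hγ (u := u) (by omega)
    have hexp : θ^((p-1-c)*(p-u)) = θ^(c*u) * θ^u := by
      rw [← pow_add]
      apply tp_congr hθ
      push_cast [Nat.cast_sub (by omega : u ≤ p), Nat.cast_sub (by omega : c ≤ p - 1),
        Nat.cast_sub (by omega : 1 ≤ p)]
      rw [ZMod.natCast_self]
      ring
    rw [hexp, mul_assoc, hsym]
    ring

end gamma

section moments
variable {i : ℕ} {γ : K → K → K}
variable (hθ : IsPrimitiveRoot θ p) (hγ : MemH p K θ i γ)

lemma Pp_index_congr {m n : ℤ} (h : m = n) : Pp p K θ m = Pp p K θ n := by rw [h]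

include hθ

lemma bin_exp (m : ℕ) : ∃ r ∈ RO p K,
    (2:K) * θ^m = 2 + 2*(m:K)*(θ-1) + ((m:K)^2 - (m:K))*(θ-1)^2 + (θ-1)^3*r := by
  induction m with
  | zero => exact ⟨0, zero_mem _, by push_cast; ring⟩
  | succ m ih =>
      obtain ⟨r, hr, hre⟩ := ih
      refine ⟨r + ((m:K)^2 - (m:K)) + (θ-1)*r, ?_, ?_⟩
      · have hm : ((m:K)^2 - (m:K)) ∈ RO p K := by
          have h1 : ((m:ℕ):K) ∈ RO p K := Subalgebra.natCast_mem _ m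
          exact sub_mem (pow_mem h1 2) h1
        exact add_mem (add_mem hr hm) (mul_mem (kappa_mem hθ) hr)
      · have : (2:K) * θ^(m+1) = θ * ((2:K) * θ^m) := by ring
        rw [this, hre]
        push_cast
        ring

lemma int_unit_cancel {k : ℤ} (hk : ¬ ((p:ℤ) ∣ k)) {x : K} {n : ℤ}
    (h : (k:K) * x ∈ Pp p K θ n) : x ∈ Pp p K θ n := by
  have hu : IsUnit (k : ℤ_[p]) := by
    rw [PadicInt.isUnit_iff]
    have h2 : ‖(k:ℤ_[p])‖ ≤ 1 := (k:ℤ_[p]).2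
    rcases lt_or_eq_of_le h2 with h3|h3
    · exact absurd ((PadicInt.norm_int_lt_one_iff_dvd k).mp h3) hk
    · exact h3
  have e1 : (k:K) * x = (k : ℤ_[p]) • x := by
    rw [Algebra.smul_def, map_intCast]
  rw [e1] at h
  have h4 := Submodule.smul_mem (Pp p K θ n) (↑hu.unit⁻¹) h
  rw [smul_smul] at h4
  have e4 : ((hu.unit⁻¹ : ℤ_[p]ˣ) : ℤ_[p]) * (k:ℤ_[p]) = 1 := hu.val_inv_mul
  rw [e4, one_smul] at h4
  exact h4

lemma nat_unit_cancel {k : ℕ} (hk : ¬ (p ∣ k)) {x : K} {n : ℤ}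
    (h : (k:K) * x ∈ Pp p K θ n) : x ∈ Pp p K θ n := by
  apply int_unit_cancel hθ (k := (k:ℤ)) (by exact_mod_cast hk)
  rwa [Int.cast_natCast]

include hγ

lemma h_mem (u : ℕ) : γ (XE θ i u) (XE θ i 0) ∈ Pp p K θ (2*(i:ℤ)+1) := by
  have := hγ.maps_into _ (XE_mem hθ u) _ (XE_mem hθ 0)
  rwa [show (2 * (i:ℤ) + 1) = ((2 * i + 1 : ℕ) : ℤ) by push_cast; ring]

/-- first and second moments of `h` -/
lemma M1_mem : (∑ u ∈ range p, (u:K) * γ (XE θ i u) (XE θ i 0)) ∈ Pp p K θ (2*(i:ℤ)+1) :=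
  sum_mem (fun u _ => RO_mul_Pp hθ (Subalgebra.natCast_mem _ u) (h_mem hθ hγ u))

lemma M2_mem : (∑ u ∈ range p, (u:K)^2 * γ (XE θ i u) (XE θ i 0)) ∈ Pp p K θ (2*(i:ℤ)+1) :=
  sum_mem (fun u _ => RO_mul_Pp hθ (pow_mem (Subalgebra.natCast_mem _ u) 2) (h_mem hθ hγ u))

lemma TT_exp (c : ℕ) : ∃ E ∈ Pp p K θ (2*(i:ℤ)+4),
    (2:K) * TT p θ i γ c =
      2*(c:K)*(θ-1) * (∑ u ∈ range p, (u:K) * γ (XE θ i u) (XE θ i 0))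
      + (c:K)^2*(θ-1)^2 * (∑ u ∈ range p, (u:K)^2 * γ (XE θ i u) (XE θ i 0))
      - (c:K)*(θ-1)^2 * (∑ u ∈ range p, (u:K) * γ (XE θ i u) (XE θ i 0)) + E := by
  classical
  choose r hrmem hrval using fun u : ℕ => bin_exp hθ (c*u)
  set h : ℕ → K := fun u => γ (XE θ i u) (XE θ i 0) with hh
  refine ⟨(θ-1)^3 * ∑ u ∈ range p, r u * h u, ?_, ?_⟩
  · have hs : (∑ u ∈ range p, r u * h u) ∈ Pp p K θ (2*(i:ℤ)+1) :=
      sum_mem (fun u _ => RO_mul_Pp hθ (hrmem u) (h_mem hθ hγ u))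
    have := kappa_pow_mul_mem hθ (k := 3) hs
    rwa [Pp_index_congr (p := p) (by push_cast; ring : (2*(i:ℤ)+1+(3:ℕ)) = 2*(i:ℤ)+4)] at this
  · have e1 : (2:K) * TT p θ i γ c = ∑ u ∈ range p, ((2:K) * θ^(c*u)) * h u := by
      unfold TT
      rw [Finset.mul_sum]
      exact Finset.sum_congr rfl (fun u _ => by rw [hh]; ring)
    have e2 : ∀ u ∈ range p, ((2:K) * θ^(c*u)) * h u =
        2 * h u + (2*(c:K)*(θ-1)) * ((u:K) * h u)
          + ((c:K)^2*(θ-1)^2) * ((u:K)^2 * h u)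
          - ((c:K)*(θ-1)^2) * ((u:K) * h u)
          + (θ-1)^3 * (r u * h u) := by
      intro u _
      rw [hrval u]
      push_cast
      ring
    rw [e1, Finset.sum_congr rfl e2]
    have hzero : ∑ u ∈ range p, h u = 0 := gamma_sum_zero hθ hγ (XE_mem hθ 0)
    rw [Finset.sum_add_distrib, Finset.sum_sub_distrib, Finset.sum_add_distrib,
      Finset.sum_add_distrib,
      ← Finset.mul_sum, ← Finset.mul_sum, ← Finset.mul_sum, ← Finset.mul_sum, ← Finset.mul_sum,
      hzero, mul_zero]
    ring

lemma M2_bound (hp5 : 5 ≤ p) :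
    (∑ u ∈ range p, (u:K)^2 * γ (XE θ i u) (XE θ i 0)) ∈ Pp p K θ (2*(i:ℤ)+2) := by
  set M1 : K := ∑ u ∈ range p, (u:K) * γ (XE θ i u) (XE θ i 0) with hM1
  set M2 : K := ∑ u ∈ range p, (u:K)^2 * γ (XE θ i u) (XE θ i 0) with hM2
  obtain ⟨E1, hE1, he1⟩ := TT_exp hθ hγ 1
  obtain ⟨E2, hE2, he2⟩ := TT_exp hθ hγ (p-2)
  obtain ⟨E3, hE3, he3⟩ := TT_exp hθ hγ 2
  obtain ⟨E4, hE4, he4⟩ := TT_exp hθ hγ (p-3)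
  have hpair1 : TT p θ i γ 1 = - TT p θ i γ (p-2) := by
    have := TT_pair hθ hγ (c := 1) (by omega)
    rwa [show p - 1 - 1 = p - 2 by omega] at this
  have hpair2 : TT p θ i γ 2 = - TT p θ i γ (p-3) := by
    have := TT_pair hθ hγ (c := 2) (by omega)
    rwa [show p - 1 - 2 = p - 3 by omega] at this
  have hc2 : ((p-2 : ℕ) : K) = (p:K) - 2 := by
    rw [Nat.cast_sub (by omega)]; norm_num
  have hc3 : ((p-3 : ℕ) : K) = (p:K) - 3 := by
    rw [Nat.cast_sub (by omega)]; norm_num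
  rw [hc2, ← hM1, ← hM2] at he2
  rw [hc3, ← hM1, ← hM2] at he4
  rw [← hM1, ← hM2] at he1 he3
  -- key cancellation
  have key : (2*(p:K) - 8) * ((θ-1)^2 * M2) = (E3 + E4) - (E1 + E2) := by
    linear_combination (-1 : K)*he1 - he2 + he3 + he4 + 2*hpair1 - 2*hpair2
  have hmem : (2*(p:K) - 8) * ((θ-1)^2 * M2) ∈ Pp p K θ (2*(i:ℤ)+4) := by
    rw [key]
    exact sub_mem (add_mem hE3 hE4) (add_mem hE1 hE2)
  have hcast : ((2*(p:ℤ) - 8 : ℤ) : K) = 2*(p:K) - 8 := by push_cast; ring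
  have hnd : ¬ ((p:ℤ) ∣ (2*(p:ℤ) - 8)) := by
    intro hd
    have hdp : (p:ℤ) ∣ 2*(p:ℤ) := ⟨2, by ring⟩
    have h8 : (p:ℤ) ∣ 8 := by
      have := dvd_sub hdp hd
      rwa [show 2*(p:ℤ) - (2*(p:ℤ) - 8) = 8 by ring] at this
    have h8' : p ∣ 8 := by exact_mod_cast h8
    have h2' : p ∣ 2 := hpf.out.dvd_of_dvd_pow
      (show p ∣ 2^3 by rw [show (2:ℕ)^3 = 8 by norm_num]; exact h8')
    have := Nat.le_of_dvd (by norm_num) h2'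
    omega
  have h2 : (θ-1)^2 * M2 ∈ Pp p K θ (2*(i:ℤ)+4) := by
    apply int_unit_cancel hθ hnd
    rwa [hcast]
  apply mem_of_kappa_pow_mul_mem hθ (k := 2)
  rwa [Pp_index_congr (p := p) (by push_cast; ring : (2*(i:ℤ)+2+(2:ℕ)) = 2*(i:ℤ)+4)]

lemma M1_bound (hp5 : 5 ≤ p) :
    (∑ u ∈ range p, (u:K) * γ (XE θ i u) (XE θ i 0)) ∈ Pp p K θ (2*(i:ℤ)+3) := by
  set M1 : K := ∑ u ∈ range p, (u:K) * γ (XE θ i u) (XE θ i 0) with hM1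
  set M2 : K := ∑ u ∈ range p, (u:K)^2 * γ (XE θ i u) (XE θ i 0) with hM2
  obtain ⟨E1, hE1, he1⟩ := TT_exp hθ hγ 1
  obtain ⟨E2, hE2, he2⟩ := TT_exp hθ hγ (p-2)
  have hpair1 : TT p θ i γ 1 = - TT p θ i γ (p-2) := by
    have := TT_pair hθ hγ (c := 1) (by omega)
    rwa [show p - 1 - 1 = p - 2 by omega] at this
  have hc2 : ((p-2 : ℕ) : K) = (p:K) - 2 := by
    rw [Nat.cast_sub (by omega)]; norm_num
  rw [hc2, ← hM1, ← hM2] at he2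
  rw [← hM1, ← hM2] at he1
  have key : (2*(p:K) - 2) * ((θ-1) * M1) =
      - ((1 + ((p:K)-2)^2) * ((θ-1)^2*M2)) + ((p:K)-1) * ((θ-1)^2*M1) - (E1 + E2) := by
    linear_combination (-1 : K)*he1 - he2 + 2*hpair1
  have hnd : ¬ ((p:ℤ) ∣ (2*(p:ℤ) - 2)) := by
    intro hd
    have hdp : (p:ℤ) ∣ 2*(p:ℤ) := ⟨2, by ring⟩
    have h8 : (p:ℤ) ∣ 2 := by
      have := dvd_sub hdp hd
      rwa [show 2*(p:ℤ) - (2*(p:ℤ) - 2) = 2 by ring] at this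
    have h8' : p ∣ 2 := by exact_mod_cast h8
    have := Nat.le_of_dvd (by norm_num) h8'
    omega
  have hcast : ((2*(p:ℤ) - 2 : ℤ) : K) = 2*(p:K) - 2 := by push_cast; ring
  have hM2b := M2_bound hθ hγ hp5
  rw [← hM2] at hM2b
  have hk2M2 : (θ-1)^2 * M2 ∈ Pp p K θ (2*(i:ℤ)+4) := by
    have := kappa_pow_mul_mem hθ (k := 2) hM2b
    rwa [Pp_index_congr (p := p) (by push_cast; ring : (2*(i:ℤ)+2+(2:ℕ)) = 2*(i:ℤ)+4)] at this
  have hROp2 : ((p:K)-2) ∈ RO p K :=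
    sub_mem (Subalgebra.natCast_mem _ p) (by exact_mod_cast Subalgebra.natCast_mem _ 2)
  have hROp1 : ((p:K)-1) ∈ RO p K := sub_mem (Subalgebra.natCast_mem _ p) (one_mem _)
  have hRO2 : (1 + ((p:K)-2)^2) ∈ RO p K := add_mem (one_mem _) (pow_mem hROp2 2)
  -- step 1 : κ M1 ∈ Pp (2i+3)
  have hM1a : M1 ∈ Pp p K θ (2*(i:ℤ)+1) := by rw [hM1]; exact M1_mem hθ hγ
  have step : ∀ m : ℤ, (θ-1)^2 * M1 ∈ Pp p K θ m → m ≤ 2*(i:ℤ)+4 →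
      (θ-1) * M1 ∈ Pp p K θ (min m (2*(i:ℤ)+4)) := by
    intro m hm hm4
    have hrhs : - ((1 + ((p:K)-2)^2) * ((θ-1)^2*M2)) + ((p:K)-1) * ((θ-1)^2*M1) - (E1 + E2)
        ∈ Pp p K θ (min m (2*(i:ℤ)+4)) := by
      have hmin1 : min m (2*(i:ℤ)+4) ≤ m := min_le_left _ _
      have hmin2 : min m (2*(i:ℤ)+4) ≤ 2*(i:ℤ)+4 := min_le_right _ _
      refine sub_mem (add_mem (neg_mem ?_) ?_) ?_
      · exact Pp_mono hθ hmin2 (RO_mul_Pp hθ hRO2 hk2M2)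
      · exact Pp_mono hθ hmin1 (RO_mul_Pp hθ hROp1 hm)
      · exact Pp_mono hθ hmin2 (add_mem hE1 hE2)
    rw [← key] at hrhs
    exact int_unit_cancel hθ hnd (by rwa [hcast])
  -- first pass : κ² M1 ∈ Pp (2i+3) trivially
  have t1 : (θ-1)^2 * M1 ∈ Pp p K θ (2*(i:ℤ)+3) := by
    have := kappa_pow_mul_mem hθ (k := 2) hM1a
    rwa [Pp_index_congr (p := p) (by push_cast; ring : (2*(i:ℤ)+1+(2:ℕ)) = 2*(i:ℤ)+3)] at this
  have t2 : (θ-1) * M1 ∈ Pp p K θ (2*(i:ℤ)+3) := by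
    have := step (2*(i:ℤ)+3) t1 (by omega)
    rwa [min_eq_left (by omega)] at this
  have t3 : M1 ∈ Pp p K θ (2*(i:ℤ)+2) := by
    have : (θ-1)^1 * M1 ∈ Pp p K θ ((2*(i:ℤ)+2) + (1:ℕ)) := by
      rw [Pp_index_congr (p := p) (by push_cast; ring : ((2*(i:ℤ)+2) + ((1:ℕ):ℤ)) = 2*(i:ℤ)+3)]
      rwa [pow_one]
    exact mem_of_kappa_pow_mul_mem hθ this
  have t4 : (θ-1)^2 * M1 ∈ Pp p K θ (2*(i:ℤ)+4) := by
    have := kappa_pow_mul_mem hθ (k := 2) t3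
    rwa [Pp_index_congr (p := p) (by push_cast; ring : (2*(i:ℤ)+2+(2:ℕ)) = 2*(i:ℤ)+4)] at this
  have t5 : (θ-1) * M1 ∈ Pp p K θ (2*(i:ℤ)+4) := by
    have := step (2*(i:ℤ)+4) t4 (by omega)
    rwa [min_self] at this
  have : (θ-1)^1 * M1 ∈ Pp p K θ ((2*(i:ℤ)+3) + (1:ℕ)) := by
    rw [Pp_index_congr (p := p) (by push_cast; ring : ((2*(i:ℤ)+3) + ((1:ℕ):ℤ)) = 2*(i:ℤ)+4)]
    rwa [pow_one]
  exact mem_of_kappa_pow_mul_mem hθ this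

lemma TT_bound (hp5 : 5 ≤ p) (c : ℕ) : TT p θ i γ c ∈ Pp p K θ (2*(i:ℤ)+4) := by
  obtain ⟨E, hE, he⟩ := TT_exp hθ hγ c
  set M1 : K := ∑ u ∈ range p, (u:K) * γ (XE θ i u) (XE θ i 0) with hM1
  set M2 : K := ∑ u ∈ range p, (u:K)^2 * γ (XE θ i u) (XE θ i 0) with hM2
  have hM1b := M1_bound hθ hγ hp5
  have hM2b := M2_bound hθ hγ hp5
  rw [← hM1] at hM1b
  rw [← hM2] at hM2b
  have hkM1 : (θ-1) * M1 ∈ Pp p K θ (2*(i:ℤ)+4) := by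
    have : (θ-1)^1 * M1 ∈ Pp p K θ ((2*(i:ℤ)+3) + (1:ℕ)) := kappa_pow_mul_mem hθ hM1b
    rw [pow_one] at this
    rwa [Pp_index_congr (p := p) (by push_cast; ring : ((2*(i:ℤ)+3) + ((1:ℕ):ℤ)) = 2*(i:ℤ)+4)]
      at this
  have hk2M2 : (θ-1)^2 * M2 ∈ Pp p K θ (2*(i:ℤ)+4) := by
    have := kappa_pow_mul_mem hθ (k := 2) hM2b
    rwa [Pp_index_congr (p := p) (by push_cast; ring : (2*(i:ℤ)+2+(2:ℕ)) = 2*(i:ℤ)+4)] at this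
  have hk2M1 : (θ-1)^2 * M1 ∈ Pp p K θ (2*(i:ℤ)+4) := by
    have := kappa_pow_mul_mem hθ (k := 2) hM1b
    have h5 : (2*(i:ℤ)+3+(2:ℕ)) = 2*(i:ℤ)+5 := by push_cast; ring
    rw [Pp_index_congr (p := p) h5] at this
    exact Pp_mono hθ (by omega) this
  have h2T : (2:K) * TT p θ i γ c ∈ Pp p K θ (2*(i:ℤ)+4) := by
    rw [he]
    refine add_mem (sub_mem (add_mem ?_ ?_) ?_) hE
    · have : (2*(c:K)) * ((θ-1) * M1) = 2*(c:K)*(θ-1)*M1 := by ring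
      rw [← this]
      refine RO_mul_Pp hθ ?_ hkM1
      have : ((2*c : ℕ) : K) = 2*(c:K) := by push_cast; ring
      rw [← this]
      exact Subalgebra.natCast_mem _ _
    · have : ((c:K)^2) * ((θ-1)^2 * M2) = (c:K)^2*(θ-1)^2*M2 := by ring
      rw [← this]
      refine RO_mul_Pp hθ ?_ hk2M2
      exact pow_mem (Subalgebra.natCast_mem _ c) 2
    · have : ((c:K)) * ((θ-1)^2 * M1) = (c:K)*(θ-1)^2*M1 := by ring
      rw [← this]
      exact RO_mul_Pp hθ (Subalgebra.natCast_mem _ c) hk2M1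
  apply nat_unit_cancel hθ (k := 2)
    (fun hd => absurd (Nat.le_of_dvd (by norm_num) hd) (by omega))
  rwa [Nat.cast_ofNat]

end moments



section qp
open Finset
variable [Algebra ℚ_[p] K] [IsScalarTower ℤ_[p] ℚ_[p] K]

lemma norm_clear (q : ℚ_[p]) : ∃ k : ℕ, ‖(p:ℚ_[p])^k * q‖ ≤ 1 := by
  rcases eq_or_ne q 0 with rfl|hq
  · exact ⟨0, by simp⟩
  obtain ⟨k, hk⟩ := pow_unbounded_of_one_lt ‖q‖ (by exact_mod_cast hpf.out.one_lt : (1:ℝ) < p)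
  refine ⟨k, ?_⟩
  have hppos : (0:ℝ) < p := by exact_mod_cast hpf.out.pos
  rw [norm_mul, norm_pow, Padic.norm_p, inv_pow,
    inv_mul_le_iff₀ (pow_pos hppos k), mul_one]
  exact le_of_lt hk

lemma norm_clear_mono {q : ℚ_[p]} {k₁ k₂ : ℕ} (h : k₁ ≤ k₂) (h1 : ‖(p:ℚ_[p])^k₁ * q‖ ≤ 1) :
    ‖(p:ℚ_[p])^k₂ * q‖ ≤ 1 := by
  have e : (p:ℚ_[p])^k₂ * q = (p:ℚ_[p])^(k₂-k₁) * ((p:ℚ_[p])^k₁ * q) := by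
    rw [← mul_assoc, ← pow_add]
    congr 2
    omega
  rw [e, norm_mul, norm_pow, Padic.norm_p]
  calc ((p:ℝ)⁻¹)^(k₂-k₁) * ‖(p:ℚ_[p])^k₁ * q‖ ≤ 1 * 1 := by
        apply mul_le_mul _ h1 (norm_nonneg _) zero_le_one
        apply pow_le_one₀ (by positivity)
        rw [inv_le_one_iff₀]
        right
        exact_mod_cast hpf.out.one_le
    _ = 1 := by norm_num

/-- every element of `K` becomes a `ℤ_p`-combination of powers of `θ` after
scaling by a power of `p`. -/
lemma rep_pow (hgen : Algebra.adjoin ℚ_[p] {θ} = ⊤) (y : K) :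
    ∃ (k n : ℕ) (f : ℕ → ℤ_[p]), ((p:ℤ_[p])^k) • y = ∑ s ∈ range n, f s • θ^s := by
  have hy : y ∈ Algebra.adjoin ℚ_[p] {θ} := by rw [hgen]; trivial
  rw [Algebra.adjoin_singleton_eq_range_aeval] at hy
  obtain ⟨q, hq⟩ := hy
  have hq' : (Polynomial.aeval θ) q = y := hq
  set n := q.natDegree + 1 with hn
  have hrep : y = ∑ s ∈ range n, q.coeff s • θ^s := by
    rw [← hq', Polynomial.aeval_eq_sum_range]
  -- a common clearing exponent
  have hcl : ∃ k : ℕ, ∀ s ∈ range n, ‖(p:ℚ_[p])^k * q.coeff s‖ ≤ 1 := by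
    choose ks hks using fun s : ℕ => norm_clear (p := p) (q.coeff s)
    refine ⟨(range n).sup ks, fun s hs => ?_⟩
    exact norm_clear_mono (Finset.le_sup hs) (hks s)
  obtain ⟨k, hk⟩ := hcl
  refine ⟨k, n, fun s => if hs : s ∈ range n then ⟨(p:ℚ_[p])^k * q.coeff s, hk s hs⟩ else 0, ?_⟩
  rw [hrep, Finset.smul_sum]
  apply Finset.sum_congr rfl
  intro s hs
  simp only [dif_pos hs]
  have e2 : ((p:ℤ_[p])^k) • q.coeff s = (p:ℚ_[p])^k * q.coeff s := by
    rw [Algebra.smul_def, map_pow, PadicInt.algebraMap_apply, PadicInt.coe_natCast]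
  have e3 : ∀ m : ℤ_[p], (m : ℚ_[p]) = (p:ℚ_[p])^k * q.coeff s →
      m • (θ^s : K) = ((p:ℚ_[p])^k * q.coeff s) • (θ^s : K) := by
    intro m hm
    rw [← algebraMap_smul (R := ℤ_[p]) ℚ_[p] m (θ^s : K), PadicInt.algebraMap_apply, hm]
  rw [← smul_assoc, e2, ← e3 ⟨(p:ℚ_[p])^k * q.coeff s, hk s hs⟩ rfl]
  exact (congrArg (fun m : ℤ_[p] => m • (θ^s : K)) (dif_pos (α := ℤ_[p]) (c := s ∈ range n)
    (t := fun hs => (⟨(p:ℚ_[p])^k * q.coeff s, hk s hs⟩ : ℤ_[p])) (e := fun _ => (0 : ℤ_[p])) hs)).symm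

lemma rep_XE (hθ : IsPrimitiveRoot θ p) (hgen : Algebra.adjoin ℚ_[p] {θ} = ⊤) (i : ℕ) (x : K) :
    ∃ (k n : ℕ) (f : ℕ → ℤ_[p]), ((p:ℤ_[p])^k) • x = ∑ s ∈ range n, f s • XE θ i s := by
  obtain ⟨k, n, f, hf⟩ := rep_pow (p := p) hgen (((θ-1)^i)⁻¹ * x)
  refine ⟨k, n, f, ?_⟩
  have hk0 : ((θ-1):K)^i ≠ 0 := pow_ne_zero _ (kappa_ne_zero hθ)
  have := congrArg (fun z => ((θ-1):K)^i * z) hf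
  simp only [Finset.mul_sum, mul_smul_comm] at this
  rw [mul_inv_cancel_left₀ hk0] at this
  rw [this]
  apply Finset.sum_congr rfl
  intro s _
  rw [XE]

lemma smul_cancel {m : ℤ_[p]} (hm : m ≠ 0) {z w : K} (h : m • z = m • w) : z = w := by
  have hindj : Function.Injective (algebraMap ℤ_[p] K) := by
    rw [IsScalarTower.algebraMap_eq ℤ_[p] ℚ_[p] K]
    refine (algebraMap ℚ_[p] K).injective.comp ?_
    intro a b hab
    rw [PadicInt.algebraMap_apply, PadicInt.algebraMap_apply] at hab
    exact Subtype.ext hab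
  have hmK : algebraMap ℤ_[p] K m ≠ 0 := by
    intro h0
    exact hm (hindj (by rw [h0, map_zero]))
  rw [Algebra.smul_def, Algebra.smul_def] at h
  exact mul_left_cancel₀ hmK h

end qp


end S3

/-- The map `ϑ_a(x ∧ y) = σ_a(x)σ_{1-a}(y) − σ_{1-a}(x)σ_a(y)`, for given
Galois automorphisms `σa = σ_a` and `σb = σ_{1-a}`. -/
noncomputable def vth (p : ℕ) [Fact p.Prime] (K : Type) [Field K] [Algebra ℚ_[p] K]
    (σa σb : K ≃ₐ[ℚ_[p]] K) (x y : K) : K :=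
  σa x * σb y - σb x * σa y

namespace S3
open Finset

variable {p : ℕ} [hpf : Fact p.Prime] {K : Type} [Field K] [Algebra ℤ_[p] K] {θ : K}

section sigma
variable [Algebra ℚ_[p] K]

lemma sigma_XE (σ : K ≃ₐ[ℚ_[p]] K) {e : ℕ} (hσ : σ θ = θ^e) (i s : ℕ) :
    σ (XE θ i s) = (θ^e - 1)^i * θ^(e*s) := by
  unfold XE
  rw [map_mul, map_pow, map_sub, map_one, hσ, map_pow, hσ, ← pow_mul]

lemma sigmaB_pow (hθ : IsPrimitiveRoot θ p) {σ : K ≃ₐ[ℚ_[p]] K} {a : ℕ} (ha : a ≤ p)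
    (hσ : σ θ = θ^((1:ℤ) - a)) : σ θ = θ^(p+1-a) := by
  rw [hσ]
  have he : (1:ℤ) - a = ((p+1-a : ℕ) : ℤ) - ((p:ℕ) : ℤ) := by
    rw [Nat.cast_sub (by omega)]
    push_cast
    ring
  rw [he, zpow_sub₀ (theta_ne_zero hθ), zpow_natCast, zpow_natCast, theta_pow_p hθ, div_one]

lemma vth_XE (σa σb : K ≃ₐ[ℚ_[p]] K) {ea eb : ℕ} (ha : σa θ = θ^ea) (hb : σb θ = θ^eb)
    (i s t : ℕ) :
    vth p K σa σb (XE θ i s) (XE θ i t)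
      = ((θ^ea - 1)^i * (θ^eb - 1)^i) * (θ^(ea*s+eb*t) - θ^(eb*s+ea*t)) := by
  unfold vth
  rw [sigma_XE σa ha, sigma_XE σb hb, sigma_XE σa ha, sigma_XE σb hb,
    pow_add, pow_add]
  ring

lemma sigma_zsmul (σ : K ≃ₐ[ℚ_[p]] K) [IsScalarTower ℤ_[p] ℚ_[p] K] (c : ℤ_[p]) (x : K) :
    σ (c • x) = c • σ x := by
  rw [Algebra.smul_def, IsScalarTower.algebraMap_apply ℤ_[p] ℚ_[p] K, map_mul,
    AlgEquiv.commutes, Algebra.smul_def, IsScalarTower.algebraMap_apply ℤ_[p] ℚ_[p] K]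

end sigma

section core
variable {i : ℕ} {γ : K → K → K} [Algebra ℚ_[p] K]
variable (hθ : IsPrimitiveRoot θ p) (hγ : MemH p K θ i γ) (hp5 : 5 ≤ p)

include hθ hγ

lemma TT_last : TT p θ i γ (p-1) = 0 := by
  have := TT_pair hθ hγ (c := p-1) (le_refl _)
  rw [Nat.sub_self, TT_zero hθ hγ, neg_zero] at this
  exact this

include hp5

lemma TT_mid : TT p θ i γ ((p-1)/2) = 0 := by
  haveI : CharZero K := charZero_of_injective_algebraMap (algebraMap ℚ_[p] K).injective
  have hodd : p % 2 = 1 := Nat.odd_iff.mp (hpf.out.odd_of_ne_two (by omega))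
  have h1 := TT_pair hθ hγ (c := (p-1)/2) (by omega)
  rw [show p - 1 - (p-1)/2 = (p-1)/2 by omega] at h1
  have h2 : (2:K) * TT p θ i γ ((p-1)/2) = 0 := by linear_combination h1
  rcases mul_eq_zero.mp h2 with h|h
  · exact absurd h two_ne_zero
  · exact h

/-- The core Fourier-inversion identity. -/
lemma core_exp {u : ℕ} (hu : u < p) :
    (p:K) * γ (XE θ i u) (XE θ i 0) =
      ∑ a ∈ Icc 2 ((p-1)/2), TT p θ i γ (p - a) * (θ^(a*u) - θ^((p+1-a)*u)) := by
  have hodd : p % 2 = 1 := Nat.odd_iff.mp (hpf.out.odd_of_ne_two (by omega))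
  -- Fourier inversion
  have inv : ∑ c ∈ range p, θ^(c*(p-u)) * TT p θ i γ c
      = (p:K) * γ (XE θ i u) (XE θ i 0) := by
    have swap : ∑ c ∈ range p, θ^(c*(p-u)) * TT p θ i γ c
        = ∑ s ∈ range p, (∑ c ∈ range p, θ^((p-u+s)*c)) * γ (XE θ i s) (XE θ i 0) := by
      unfold TT
      have e1 : ∀ c ∈ range p, θ^(c*(p-u)) * ∑ s ∈ range p, θ^(c*s) * γ (XE θ i s) (XE θ i 0)
          = ∑ s ∈ range p, θ^((p-u+s)*c) * γ (XE θ i s) (XE θ i 0) := by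
        intro c _
        rw [Finset.mul_sum]
        apply Finset.sum_congr rfl
        intro s _
        rw [← mul_assoc, ← pow_add]
        congr 2
        ring
      rw [Finset.sum_congr rfl e1, Finset.sum_comm]
      apply Finset.sum_congr rfl
      intro s _
      rw [Finset.sum_mul]
    rw [swap]
    have e2 : ∀ s ∈ range p, (∑ c ∈ range p, θ^((p-u+s)*c)) * γ (XE θ i s) (XE θ i 0)
        = (if s = u then (p:K) else 0) * γ (XE θ i s) (XE θ i 0) := by
      intro s hs
      rw [mem_range] at hs
      rw [sum_theta_pow hθ (p-u+s)]
      congr 1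
      have : p ∣ (p - u + s) ↔ s = u := by
        constructor
        · rintro ⟨c, hc⟩
          have hc2 : c < 2 := by
            by_contra hc2
            push_neg at hc2
            have := Nat.mul_le_mul_left p hc2
            omega
          interval_cases c <;> omega
        · rintro rfl
          exact ⟨1, by omega⟩
      simp only [this]
    rw [Finset.sum_congr rfl e2, Finset.sum_eq_single u
      (fun b _ hb => by rw [if_neg hb, zero_mul])
      (fun h => absurd (mem_range.mpr hu) h), if_pos rfl]
  -- the flip congruence
  have exp_flip : ∀ {c : ℕ}, c ≤ p → θ^(c*(p-u)) = θ^((p-c)*u) := by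
    intro c hc
    apply tp_congr hθ
    push_cast [Nat.cast_sub hc, Nat.cast_sub (le_of_lt hu), ZMod.natCast_self]
    ring
  -- splitting the sum
  have hS1 : Icc 1 ((p-3)/2) ∪ Icc ((p+1)/2) (p-2) ⊆ range p := by
    intro c hc
    rw [mem_union, mem_Icc, mem_Icc] at hc
    rw [mem_range]
    omega
  have hvan : ∀ c ∈ range p, c ∉ (Icc 1 ((p-3)/2) ∪ Icc ((p+1)/2) (p-2)) →
      θ^(c*(p-u)) * TT p θ i γ c = 0 := by
    intro c hc hnc
    rw [mem_union, mem_Icc, mem_Icc] at hnc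
    rw [mem_range] at hc
    have hcase : c = 0 ∨ c = (p-1)/2 ∨ c = p-1 := by omega
    rcases hcase with rfl|rfl|rfl
    · rw [TT_zero hθ hγ, mul_zero]
    · rw [TT_mid hθ hγ hp5, mul_zero]
    · rw [TT_last hθ hγ, mul_zero]
  have hsplit : ∑ c ∈ range p, θ^(c*(p-u)) * TT p θ i γ c
      = ∑ c ∈ Icc 1 ((p-3)/2), θ^(c*(p-u)) * TT p θ i γ c
        + ∑ c ∈ Icc ((p+1)/2) (p-2), θ^(c*(p-u)) * TT p θ i γ c := by
    have hdisj : Disjoint (Icc 1 ((p-3)/2)) (Icc ((p+1)/2) (p-2)) := by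
      rw [Finset.disjoint_left]
      intro c h1 h2
      rw [mem_Icc] at h1 h2
      omega
    rw [← Finset.sum_union hdisj]
    exact (Finset.sum_subset hS1 hvan).symm
  have hlow : ∑ c ∈ Icc 1 ((p-3)/2), θ^(c*(p-u)) * TT p θ i γ c
      = ∑ a ∈ Icc 2 ((p-1)/2), -(θ^((p+1-a)*u) * TT p θ i γ (p-a)) := by
    apply Finset.sum_nbij' (fun c => c + 1) (fun a => a - 1)
    · intro c hc
      rw [mem_Icc] at *
      omega
    · intro a ha
      rw [mem_Icc] at *
      omega
    · intro c hc
      omega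
    · intro a ha
      rw [mem_Icc] at ha
      omega
    · intro c hc
      rw [mem_Icc] at hc
      have h1 : TT p θ i γ c = - TT p θ i γ (p - (c+1)) := by
        have := TT_pair hθ hγ (c := c) (by omega)
        rwa [show p - 1 - c = p - (c+1) by omega] at this
      have h2 : θ^(c*(p-u)) = θ^((p+1-(c+1))*u) := by
        rw [show p+1-(c+1) = p - c by omega]
        exact exp_flip (by omega)
      rw [h1, h2]
      ring
  have hhigh : ∑ c ∈ Icc ((p+1)/2) (p-2), θ^(c*(p-u)) * TT p θ i γ c
      = ∑ a ∈ Icc 2 ((p-1)/2), θ^(a*u) * TT p θ i γ (p-a) := by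
    apply Finset.sum_nbij' (fun c => p - c) (fun a => p - a)
    · intro c hc
      rw [mem_Icc] at *
      omega
    · intro a ha
      rw [mem_Icc] at *
      omega
    · intro c hc
      rw [mem_Icc] at hc
      omega
    · intro a ha
      rw [mem_Icc] at ha
      omega
    · intro c hc
      rw [mem_Icc] at hc
      have h2 : θ^(c*(p-u)) = θ^((p-c)*u) := exp_flip (by omega)
      rw [h2, show p - (p - c) = c by omega]
  rw [← inv, hsplit, hlow, hhigh, ← Finset.sum_add_distrib]
  apply Finset.sum_congr rfl
  intro a _
  ring

lemma full_exp (s t : ℕ) :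
    (p:K) * γ (XE θ i s) (XE θ i t) =
      ∑ a ∈ Icc 2 ((p-1)/2),
        TT p θ i γ (p-a) * (θ^(a*s+(p+1-a)*t) - θ^((p+1-a)*s+a*t)) := by
  have main : ∀ s t : ℕ, t ≤ s → (p:K) * γ (XE θ i s) (XE θ i t) =
      ∑ a ∈ Icc 2 ((p-1)/2),
        TT p θ i γ (p-a) * (θ^(a*s+(p+1-a)*t) - θ^((p+1-a)*s+a*t)) := by
    intro s t hts
    rw [gamma_red hθ hγ hts, XE_mod hθ (s-t)]
    have hcore := core_exp hθ hγ hp5 (u := (s-t)%p) (Nat.mod_lt _ hpf.out.pos)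
    calc (p:K) * (θ^t * γ (XE θ i ((s-t)%p)) (XE θ i 0))
        = θ^t * ((p:K) * γ (XE θ i ((s-t)%p)) (XE θ i 0)) := by ring
      _ = θ^t * ∑ a ∈ Icc 2 ((p-1)/2),
            TT p θ i γ (p-a) * (θ^(a*((s-t)%p)) - θ^((p+1-a)*((s-t)%p))) := by rw [hcore]
      _ = ∑ a ∈ Icc 2 ((p-1)/2),
            TT p θ i γ (p-a) * (θ^(a*s+(p+1-a)*t) - θ^((p+1-a)*s+a*t)) := by
          rw [Finset.mul_sum]
          apply Finset.sum_congr rfl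
          intro a ha
          rw [mem_Icc] at ha
          have e1 : θ^t * θ^(a*((s-t)%p)) = θ^(a*s+(p+1-a)*t) := by
            rw [← pow_add]
            apply tp_congr hθ
            push_cast [ZMod.natCast_mod, Nat.cast_sub hts, Nat.cast_sub (show a ≤ p+1 by omega),
              ZMod.natCast_self]
            ring
          have e2 : θ^t * θ^((p+1-a)*((s-t)%p)) = θ^((p+1-a)*s+a*t) := by
            rw [← pow_add]
            apply tp_congr hθ
            push_cast [ZMod.natCast_mod, Nat.cast_sub hts, Nat.cast_sub (show a ≤ p+1 by omega),
              ZMod.natCast_self]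
            ring
          rw [← e1, ← e2]
          ring
  rcases le_total t s with h|h
  · exact main s t h
  · rw [gamma_anti hθ hγ (XE_mem hθ s) (XE_mem hθ t)]
    have h2 := main t s h
    calc (p:K) * (- γ (XE θ i t) (XE θ i s))
        = -((p:K) * γ (XE θ i t) (XE θ i s)) := by ring
      _ = -∑ a ∈ Icc 2 ((p-1)/2),
            TT p θ i γ (p-a) * (θ^(a*t+(p+1-a)*s) - θ^((p+1-a)*t+a*s)) := by rw [h2]
      _ = ∑ a ∈ Icc 2 ((p-1)/2),
            TT p θ i γ (p-a) * (θ^(a*s+(p+1-a)*t) - θ^((p+1-a)*s+a*t)) := by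
          rw [← Finset.sum_neg_distrib]
          apply Finset.sum_congr rfl
          intro a _
          rw [show a*t+(p+1-a)*s = (p+1-a)*s+a*t by ring,
            show (p+1-a)*t+a*s = a*s+(p+1-a)*t by ring]
          ring

omit hθ hγ hp5 in
lemma dvd_win {a b : ℕ} (ha : 2 ≤ a) (ha2 : a ≤ (p-1)/2) (hb : 2 ≤ b) (hb2 : b ≤ (p-1)/2) :
    (p ∣ (p - b + a) ↔ a = b) ∧ ¬ (p ∣ (2*p+1-a-b)) := by
  have hp2 := hpf.out.two_le
  constructor
  · constructor
    · rintro ⟨c, hc⟩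
      have hc2 : c < 2 := by
        by_contra hc2
        push_neg at hc2
        have := Nat.mul_le_mul_left p hc2
        omega
      interval_cases c <;> omega
    · rintro rfl
      exact ⟨1, by omega⟩
  · rintro ⟨c, hc⟩
    have hc2 : c < 2 := by
      by_contra hc2
      push_neg at hc2
      have := Nat.mul_le_mul_left p hc2
      omega
    interval_cases c <;> omega

include hγ in
omit hp5 in
lemma recover {c' : ℕ → K} {b : ℕ} (hb : b ∈ Icc 2 ((p-1)/2))
    (hexp : ∀ s : ℕ, γ (XE θ i s) (XE θ i 0)
      = ∑ a ∈ Icc 2 ((p-1)/2), c' a *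
          (((θ^a - 1)^i * (θ^(p+1-a) - 1)^i) * (θ^(a*s) - θ^((p+1-a)*s)))) :
    TT p θ i γ (p - b) = (p:K) * (c' b * ((θ^b-1)^i * (θ^(p+1-b)-1)^i)) := by
  rw [mem_Icc] at hb
  unfold TT
  have step1 : ∀ s ∈ range p, θ^((p-b)*s) * γ (XE θ i s) (XE θ i 0)
      = ∑ a ∈ Icc 2 ((p-1)/2), c' a * (((θ^a - 1)^i * (θ^(p+1-a) - 1)^i)
          * (θ^((p-b+a)*s) - θ^((2*p+1-a-b)*s))) := by
    intro s _
    rw [hexp s, Finset.mul_sum]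
    apply Finset.sum_congr rfl
    intro a ha
    rw [mem_Icc] at ha
    have e1 : θ^((p-b)*s) * θ^(a*s) = θ^((p-b+a)*s) := by
      rw [← pow_add]
      congr 1
      ring
    have e2 : θ^((p-b)*s) * θ^((p+1-a)*s) = θ^((2*p+1-a-b)*s) := by
      rw [← pow_add]
      congr 1
      rw [show 2*p+1-a-b = (p-b)+(p+1-a) by omega]
      ring
    rw [← e1, ← e2]
    ring
  rw [Finset.sum_congr rfl step1, Finset.sum_comm]
  have step2 : ∀ a ∈ Icc 2 ((p-1)/2),
      ∑ s ∈ range p, c' a * (((θ^a - 1)^i * (θ^(p+1-a) - 1)^i)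
          * (θ^((p-b+a)*s) - θ^((2*p+1-a-b)*s)))
      = c' a * (((θ^a - 1)^i * (θ^(p+1-a) - 1)^i)
          * ((if a = b then (p:K) else 0) - 0)) := by
    intro a ha
    rw [mem_Icc] at ha
    obtain ⟨hiff, hnd⟩ := dvd_win (p := p) ha.1 ha.2 hb.1 hb.2
    rw [← Finset.mul_sum, ← Finset.mul_sum,
      show ∑ s ∈ range p, (θ^((p-b+a)*s) - θ^((2*p+1-a-b)*s))
        = ∑ s ∈ range p, θ^((p-b+a)*s) - ∑ s ∈ range p, θ^((2*p+1-a-b)*s) from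
        Finset.sum_sub_distrib _ _,
      sum_theta_pow hθ (p-b+a), sum_theta_pow hθ (2*p+1-a-b), if_neg hnd]
    congr 2
    simp only [hiff]
  rw [Finset.sum_congr rfl step2, Finset.sum_eq_single b
    (fun a _ hab => by rw [if_neg hab]; ring)
    (fun hmem => absurd (by rw [mem_Icc]; omega) hmem), if_pos rfl]
  ring

end core

/-- The coefficients. -/
noncomputable def CC (p : ℕ) [Fact p.Prime] {K : Type} [Field K] (θ : K) (i : ℕ)
    (γ : K → K → K) : ℕ → K :=
  fun a => if a ∈ Finset.Icc 2 ((p-1)/2) then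
    ((p:K) * ((θ^a - 1)^i * (θ^(p+1-a) - 1)^i))⁻¹ * TT p θ i γ (p - a) else 0

section monovth
variable {i : ℕ} {γ : K → K → K} [Algebra ℚ_[p] K]
variable (hθ : IsPrimitiveRoot θ p) (hγ : MemH p K θ i γ) (hp5 : 5 ≤ p)

omit hpf in
lemma abound {a : ℕ} (hpa : 5 ≤ p) (ha : a ∈ Icc 2 ((p-1)/2)) :
    2 ≤ a ∧ a ≤ (p-1)/2 ∧ a < p ∧ 1 ≤ p+1-a ∧ p+1-a < p ∧ a ≤ p+1 := by
  rw [mem_Icc] at ha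
  omega

include hθ

lemma nu_ne {a : ℕ} (hpa : 5 ≤ p) (ha : a ∈ Icc 2 ((p-1)/2)) :
    ((θ^a - 1)^i * (θ^(p+1-a) - 1)^i) ≠ 0 := by
  obtain ⟨h1, h2, h3, h4, h5, h6⟩ := abound (p := p) hpa ha
  exact mul_ne_zero
    (pow_ne_zero _ (theta_pow_sub_one_ne hθ (not_dvd_of_lt (by omega) h3)))
    (pow_ne_zero _ (theta_pow_sub_one_ne hθ (not_dvd_of_lt h4 h5)))

include hγ hp5

lemma mono_vth (σA σB : ℕ → (K ≃ₐ[ℚ_[p]] K))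
    (hσA : ∀ a ∈ Icc 2 ((p-1)/2), σA a θ = θ^a)
    (hσB : ∀ a ∈ Icc 2 ((p-1)/2), σB a θ = θ^((1:ℤ) - a)) (s t : ℕ) :
    γ (XE θ i s) (XE θ i t) =
      ∑ a ∈ Icc 2 ((p-1)/2), CC p θ i γ a * vth p K (σA a) (σB a) (XE θ i s) (XE θ i t) := by
  have hp0 : ((p:ℕ):K) ≠ 0 := pK_ne_zero hθ
  apply mul_left_cancel₀ hp0
  rw [full_exp hθ hγ hp5 s t, Finset.mul_sum]
  apply Finset.sum_congr rfl
  intro a ha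
  obtain ⟨h1, h2, h3, h4, h5, h6⟩ := abound (p := p) hp5 ha
  have hB : σB a θ = θ^(p+1-a) := sigmaB_pow hθ (by omega) (hσB a ha)
  rw [CC, if_pos ha, vth_XE (σA a) (σB a) (hσA a ha) hB i s t]
  have hnu := nu_ne hθ (i := i) hp5 ha
  have hu : θ^a - 1 ≠ 0 := theta_pow_sub_one_ne hθ (not_dvd_of_lt (by omega) h3)
  have hv : θ^(p+1-a) - 1 ≠ 0 := theta_pow_sub_one_ne hθ (not_dvd_of_lt h4 h5)
  field_simp

end monovth

section bilin
variable {i : ℕ} {γ : K → K → K} [Algebra ℚ_[p] K] [IsScalarTower ℤ_[p] ℚ_[p] K]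
variable (hθ : IsPrimitiveRoot θ p) (hγ : MemH p K θ i γ)

include hθ hγ

lemma gamma_expand {x y : K} (hx : x ∈ Pp p K θ i) (hy : y ∈ Pp p K θ i)
    {k1 k2 n1 n2 : ℕ} {f g : ℕ → ℤ_[p]}
    (hfx : ((p:ℤ_[p])^k1) • x = ∑ s ∈ range n1, f s • XE θ i s)
    (hgy : ((p:ℤ_[p])^k2) • y = ∑ t ∈ range n2, g t • XE θ i t) :
    ((p:ℤ_[p])^k1 * (p:ℤ_[p])^k2) • γ x y
      = ∑ s ∈ range n1, ∑ t ∈ range n2, (f s * g t) • γ (XE θ i s) (XE θ i t) := by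
  have hxS : (∑ s ∈ range n1, f s • XE θ i s) ∈ Pp p K θ i := by
    rw [← hfx]; exact Submodule.smul_mem _ _ hx
  have hyS : (∑ t ∈ range n2, g t • XE θ i t) ∈ Pp p K θ i := by
    rw [← hgy]; exact Submodule.smul_mem _ _ hy
  calc ((p:ℤ_[p])^k1 * (p:ℤ_[p])^k2) • γ x y
      = ((p:ℤ_[p])^k1) • (((p:ℤ_[p])^k2) • γ x y) := mul_smul _ _ _
    _ = ((p:ℤ_[p])^k1) • γ x (((p:ℤ_[p])^k2) • y) := by rw [hγ.smul_right _ x hx y hy]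
    _ = γ (((p:ℤ_[p])^k1) • x) (((p:ℤ_[p])^k2) • y) := by
        rw [hγ.smul_left _ x hx _ (Submodule.smul_mem _ _ hy)]
    _ = γ (∑ s ∈ range n1, f s • XE θ i s) (∑ t ∈ range n2, g t • XE θ i t) := by
        rw [hfx, hgy]
    _ = ∑ s ∈ range n1, ∑ t ∈ range n2, (f s * g t) • γ (XE θ i s) (XE θ i t) := by
        rw [gamma_sum_left hθ hγ (fun s _ => Submodule.smul_mem _ _ (XE_mem hθ s)) hyS]
        apply Finset.sum_congr rfl
        intro s _
        rw [hγ.smul_left _ _ (XE_mem hθ s) _ hyS,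
          gamma_sum_right hθ hγ (fun t _ => Submodule.smul_mem _ _ (XE_mem hθ t)) (XE_mem hθ s),
          Finset.smul_sum]
        apply Finset.sum_congr rfl
        intro t _
        rw [hγ.smul_right _ _ (XE_mem hθ s) _ (XE_mem hθ t), smul_smul]

omit hθ hγ in
lemma vth_expand (σa σb : K ≃ₐ[ℚ_[p]] K) {x y : K}
    {k1 k2 n1 n2 : ℕ} {f g : ℕ → ℤ_[p]}
    (hfx : ((p:ℤ_[p])^k1) • x = ∑ s ∈ range n1, f s • XE θ i s)
    (hgy : ((p:ℤ_[p])^k2) • y = ∑ t ∈ range n2, g t • XE θ i t) :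
    ((p:ℤ_[p])^k1 * (p:ℤ_[p])^k2) • vth p K σa σb x y
      = ∑ s ∈ range n1, ∑ t ∈ range n2, (f s * g t) • vth p K σa σb (XE θ i s) (XE θ i t) := by
  have key : vth p K σa σb (((p:ℤ_[p])^k1) • x) (((p:ℤ_[p])^k2) • y)
      = ((p:ℤ_[p])^k1 * (p:ℤ_[p])^k2) • vth p K σa σb x y := by
    unfold vth
    rw [sigma_zsmul σa, sigma_zsmul σb, sigma_zsmul σa, sigma_zsmul σb]
    rw [smul_mul_smul_comm, smul_mul_smul_comm, ← smul_sub]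
  rw [← key, hfx, hgy]
  unfold vth
  rw [map_sum, map_sum, map_sum, map_sum]
  simp only [sigma_zsmul]
  rw [Finset.sum_mul_sum, Finset.sum_mul_sum, ← Finset.sum_sub_distrib]
  apply Finset.sum_congr rfl
  intro s _
  rw [← Finset.sum_sub_distrib]
  apply Finset.sum_congr rfl
  intro t _
  rw [smul_sub]
  congr 1 <;>
  · rw [smul_mul_assoc, mul_smul_comm, smul_smul]

end bilin
end S3


namespace S3
open Finset
variable {p : ℕ} [hpf : Fact p.Prime] {K : Type} [Field K] [Algebra ℤ_[p] K] {θ : K}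

section ccmem
variable {i : ℕ} {γ : K → K → K} [Algebra ℚ_[p] K]
variable (hθ : IsPrimitiveRoot θ p) (hγ : MemH p K θ i γ) (hp5 : 5 ≤ p)
include hθ hγ hp5

lemma CC_mem {a : ℕ} (ha : a ∈ Icc 2 ((p-1)/2)) :
    CC p θ i γ a ∈ Pp p K θ (5 - p) := by
  obtain ⟨h1, h2, h3, h4, h5, h6⟩ := abound (p := p) hp5 ha
  rw [CC, if_pos ha, mul_inv]
  have hp1 : ((p:ℕ):K)⁻¹ ∈ Pp p K θ (1 - p) := inv_p_mem hθ (by omega)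
  have hnu : ((θ^a - 1)^i * (θ^(p+1-a) - 1)^i)⁻¹ ∈ Pp p K θ (-(2*(i:ℤ))) := by
    rw [mul_inv, ← inv_pow, ← inv_pow]
    have ha1 : (θ^a - 1)⁻¹ ∈ Pp p K θ (-1) := inv_tpso_mem hθ (not_dvd_of_lt (by omega) h3)
    have hb1 : (θ^(p+1-a) - 1)⁻¹ ∈ Pp p K θ (-1) := inv_tpso_mem hθ (not_dvd_of_lt h4 h5)
    have := Pp_mul hθ (Pp_pow hθ ha1 i) (Pp_pow hθ hb1 i)
    rwa [Pp_index_congr (p := p)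
      (show (i:ℤ) * (-1) + (i:ℤ) * (-1) = -(2*(i:ℤ)) by ring)] at this
  have hT : TT p θ i γ (p - a) ∈ Pp p K θ (2*(i:ℤ)+4) := TT_bound hθ hγ hp5 _
  have := Pp_mul hθ (Pp_mul hθ hp1 hnu) hT
  rwa [Pp_index_congr (p := p)
    (show (1 - (p:ℤ)) + (-(2*(i:ℤ))) + (2*(i:ℤ)+4) = 5 - p by ring)] at this

end ccmem
end S3


/-- `γ ∈ Ĥ_i`: `γ ∈ H_i` and `γ` is surjective onto `𝔭^(2i+1)`,
i.e. the `ℤ_p`-span of the values of `γ` on `𝔭^i ∧ 𝔭^i` is all of `𝔭^(2i+1)`. -/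
structure MemHhat (p : ℕ) [Fact p.Prime] (K : Type) [Field K] [Algebra ℤ_[p] K]
    (θ : K) (i : ℕ) (γ : K → K → K) extends MemH p K θ i γ : Prop where
  surj : ∀ z ∈ Pp p K θ (2 * i + 1),
    z ∈ Submodule.span ℤ_[p] {w : K | ∃ x ∈ Pp p K θ i, ∃ y ∈ Pp p K θ i, γ x y = w}

namespace S3
variable {p : ℕ} [hpf : Fact p.Prime] {K : Type} [Field K] [Algebra ℤ_[p] K] {θ : K}

lemma valK_ge (hθ : IsPrimitiveRoot θ p) {x : K} {n : ℤ} (hx : x ∈ Pp p K θ n) :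
    ((n : ℤ) : WithTop ℤ) ≤ valK p K θ x := by
  unfold valK
  split_ifs with h
  · obtain ⟨hz1, hz2⟩ := h.choose_spec
    rw [WithTop.coe_le_coe]
    by_contra hlt
    push_neg at hlt
    exact hz2 (Pp_mono hθ (by omega) hx)
  · exact le_top

end S3

/-- Each `γ ∈ Ĥ_i` can be written uniquely in the form
`γ = Σ_{a=2}^{(p-1)/2} c_a ϑ_a` with coefficients `c_a ∈ K` satisfying
`val(c_a) ≥ 5 - p`. -/
theorem stmt_3 (p : ℕ) [Fact p.Prime] (hp5 : 5 ≤ p)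
    (K : Type) [Field K] [Algebra ℚ_[p] K] [Algebra ℤ_[p] K]
    [IsScalarTower ℤ_[p] ℚ_[p] K]
    (θ : K) (hθ : IsPrimitiveRoot θ p)
    (hgen : Algebra.adjoin ℚ_[p] {θ} = ⊤)
    -- the Galois automorphisms `σ_a` and `σ_{1-a}` for `2 ≤ a ≤ (p-1)/2`
    (σA σB : ℕ → (K ≃ₐ[ℚ_[p]] K))
    (hσA : ∀ a ∈ Finset.Icc 2 ((p - 1) / 2), σA a θ = θ ^ a)
    (hσB : ∀ a ∈ Finset.Icc 2 ((p - 1) / 2), σB a θ = θ ^ ((1 : ℤ) - a))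
    (i : ℕ) (γ : K → K → K) (hγ : MemHhat p K θ i γ) :
    ∃! c : ℕ → K,
      (∀ a, a ∉ Finset.Icc 2 ((p - 1) / 2) → c a = 0) ∧
      (∀ a ∈ Finset.Icc 2 ((p - 1) / 2),
        ((5 - (p : ℤ) : ℤ) : WithTop ℤ) ≤ valK p K θ (c a)) ∧
      ∀ x ∈ Pp p K θ i, ∀ y ∈ Pp p K θ i,
        γ x y = ∑ a ∈ Finset.Icc 2 ((p - 1) / 2),
          c a * vth p K (σA a) (σB a) x y := by
  classical
  have hγ' := hγ.toMemH
  have hpne : ((p:ℕ) : ℤ_[p]) ≠ 0 := Nat.cast_ne_zero.mpr (Nat.Prime.ne_zero Fact.out)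
  refine ⟨S3.CC p θ i γ, ⟨?_, ?_, ?_⟩, ?_⟩
  · intro a ha
    rw [S3.CC, if_neg ha]
  · intro a ha
    exact S3.valK_ge hθ (S3.CC_mem hθ hγ' hp5 ha)
  · -- the expansion
    intro x hx y hy
    obtain ⟨k1, n1, f, hf⟩ := S3.rep_XE hθ hgen i x
    obtain ⟨k2, n2, g, hg⟩ := S3.rep_XE hθ hgen i y
    have hm : ((p:ℤ_[p])^k1 * (p:ℤ_[p])^k2) ≠ 0 :=
      mul_ne_zero (pow_ne_zero _ hpne) (pow_ne_zero _ hpne)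
    apply S3.smul_cancel hm
    rw [S3.gamma_expand hθ hγ' hx hy hf hg]
    have hR : ((p:ℤ_[p])^k1 * (p:ℤ_[p])^k2) •
          (∑ a ∈ Finset.Icc 2 ((p - 1) / 2), S3.CC p θ i γ a * vth p K (σA a) (σB a) x y)
        = ∑ s ∈ Finset.range n1, ∑ t ∈ Finset.range n2, (f s * g t) •
            (∑ a ∈ Finset.Icc 2 ((p - 1) / 2),
              S3.CC p θ i γ a * vth p K (σA a) (σB a) (S3.XE θ i s) (S3.XE θ i t)) := by
      rw [Finset.smul_sum]
      have e1 : ∀ a ∈ Finset.Icc 2 ((p - 1) / 2),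
          ((p:ℤ_[p])^k1 * (p:ℤ_[p])^k2) • (S3.CC p θ i γ a * vth p K (σA a) (σB a) x y)
          = ∑ s ∈ Finset.range n1, ∑ t ∈ Finset.range n2,
              (f s * g t) • (S3.CC p θ i γ a * vth p K (σA a) (σB a) (S3.XE θ i s) (S3.XE θ i t)) := by
        intro a _
        rw [← mul_smul_comm, S3.vth_expand (σA a) (σB a) hf hg, Finset.mul_sum]
        apply Finset.sum_congr rfl
        intro s _
        rw [Finset.mul_sum]
        apply Finset.sum_congr rfl
        intro t _
        exact mul_smul_comm _ _ _
      rw [Finset.sum_congr rfl e1, Finset.sum_comm]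
      apply Finset.sum_congr rfl
      intro s _
      rw [Finset.sum_comm]
      apply Finset.sum_congr rfl
      intro t _
      rw [Finset.smul_sum]
    rw [hR]
    apply Finset.sum_congr rfl
    intro s _
    apply Finset.sum_congr rfl
    intro t _
    rw [S3.mono_vth hθ hγ' hp5 σA σB hσA hσB s t]
  · -- uniqueness
    rintro c' ⟨hz', _, hexp'⟩
    funext a
    by_cases ha : a ∈ Finset.Icc 2 ((p - 1) / 2)
    · have hexp0 : ∀ s : ℕ, γ (S3.XE θ i s) (S3.XE θ i 0)
          = ∑ b ∈ Finset.Icc 2 ((p-1)/2), c' b *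
              (((θ^b - 1)^i * (θ^(p+1-b) - 1)^i) * (θ^(b*s) - θ^((p+1-b)*s))) := by
        intro s
        rw [hexp' (S3.XE θ i s) (S3.XE_mem hθ s) (S3.XE θ i 0) (S3.XE_mem hθ 0)]
        apply Finset.sum_congr rfl
        intro b hb
        obtain ⟨h1, h2, h3, h4, h5, h6⟩ := S3.abound (p := p) hp5 hb
        rw [S3.vth_XE (σA b) (σB b) (hσA b hb) (S3.sigmaB_pow hθ (by omega) (hσB b hb)) i s 0]
        norm_num
      have hrec := S3.recover hθ hγ' ha hexp0
      have hnu := S3.nu_ne hθ (i := i) hp5 ha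
      have hp0 : ((p:ℕ):K) ≠ 0 := S3.pK_ne_zero hθ
      obtain ⟨h1, h2, h3, h4, h5, h6⟩ := S3.abound (p := p) hp5 ha
      have hu : θ^a - 1 ≠ 0 := S3.theta_pow_sub_one_ne hθ (S3.not_dvd_of_lt (by omega) h3)
      have hv : θ^(p+1-a) - 1 ≠ 0 := S3.theta_pow_sub_one_ne hθ (S3.not_dvd_of_lt h4 h5)
      rw [S3.CC, if_pos ha, hrec]
      field_simp
    · rw [hz' a ha, S3.CC, if_neg ha]
end

section
/- Let γ ∈ Ĥ_i with offset ρ = ρ(γ) and let d = p − 1. Then for all j, k ≥ i: (a) a(j,j) = 0; (b) a(j,k) ≡ −a(k,j) mod p; (c) a(j,k) = a(j+d,k) = a(j,k+d); (d) a(j,k) ≡ a(j+1,k) + a(j,k+1) mod p; (e) a(j,j+1) = a(j,j+2); (f) a(j, j+d−2) = a(j+d−1, j+d−2). -/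
section Aux

variable {p : ℕ} [Fact p.Prime] {K : Type} [Field K] [Algebra ℤ_[p] K]

theorem theta_mem {θ : K} (hθp : θ ^ p = 1) : θ ∈ RO p K := by
  refine ⟨Polynomial.X ^ p - Polynomial.C 1, Polynomial.monic_X_pow_sub_C 1
    (Nat.Prime.ne_zero Fact.out), ?_⟩
  simp [hθp]

/-- The data of a unit decomposition `p = κ^(p-1) u`, `u v = 1`, `u + 1 = κ w`. -/
structure Good (p : ℕ) [Fact p.Prime] (K : Type) [Field K] [Algebra ℤ_[p] K] (θ : K) : Type where
  u : K
  v : K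
  w : K
  hu : u ∈ RO p K
  hv : v ∈ RO p K
  hw : w ∈ RO p K
  hpu : (p : K) = (θ - 1) ^ (p - 1) * u
  huv : u * v = 1
  hw1 : u + 1 = (θ - 1) * w

theorem good_nonempty (hp5 : 5 ≤ p) {θ : K} (hθ : IsPrimitiveRoot θ p) :
    Nonempty (Good p K θ) := by
  have hp : p.Prime := Fact.out
  have hp1 : 1 < p := by omega
  have hθO : θ ∈ RO p K := theta_mem hθ.pow_eq_one
  have hκO : θ - 1 ∈ RO p K := sub_mem hθO (one_mem _)
  have hκ : θ - 1 ≠ 0 := sub_ne_zero.mpr (hθ.ne_one hp1)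
  -- geometric sums
  set s : ℕ → K := fun m => ∑ t ∈ Finset.range m, θ ^ t with hs
  have hsO : ∀ m, s m ∈ RO p K := fun m => sum_mem fun t _ => pow_mem hθO t
  have hs_eq : ∀ m, θ ^ m - 1 = s m * (θ - 1) := fun m => (geom_sum_mul θ m).symm
  -- inverses of geometric sums
  have hst : ∀ m, 1 ≤ m → m < p → ∃ t ∈ RO p K, s m * t = 1 := by
    intro m hm1 hmp
    have hmz : (m : ZMod p) ≠ 0 := by
      rw [Ne, ZMod.natCast_eq_zero_iff]
      exact fun h => absurd (Nat.le_of_dvd (by omega) h) (by omega)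
    set m' : ℕ := ((m : ZMod p)⁻¹).val with hm'
    have hmm' : ∃ c, m * m' = 1 + p * c := by
      have h1 : ((m * m' : ℕ) : ZMod p) = ((1 : ℕ) : ZMod p) := by
        push_cast [hm', ZMod.natCast_val, ZMod.cast_id]
        rw [mul_inv_cancel₀ hmz]
      have h2 := (ZMod.natCast_eq_natCast_iff _ _ _).mp h1
      have h2' : m * m' % p = 1 := by rw [Nat.ModEq] at h2; rwa [Nat.mod_eq_of_lt hp1] at h2
      refine ⟨m * m' / p, ?_⟩
      conv_lhs => rw [← Nat.div_add_mod (m * m') p]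
      rw [h2', Nat.add_comm]
    obtain ⟨c, hc⟩ := hmm'
    refine ⟨∑ r ∈ Finset.range m', (θ ^ m) ^ r, sum_mem fun r _ => pow_mem (pow_mem hθO m) r, ?_⟩
    have key : (∑ r ∈ Finset.range m', (θ ^ m) ^ r) * (θ ^ m - 1) = θ - 1 := by
      rw [geom_sum_mul, ← pow_mul, hc, pow_add, pow_mul, hθ.pow_eq_one, one_pow, mul_one, pow_one]
    rw [hs_eq m] at key
    refine mul_right_cancel₀ hκ ?_
    linear_combination key
  have hst' : ∀ m : ℕ, ∃ tm : K, 1 ≤ m → m < p → tm ∈ RO p K ∧ s m * tm = 1 := by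
    intro m
    by_cases h : 1 ≤ m ∧ m < p
    · obtain ⟨tm, h1, h2⟩ := hst m h.1 h.2
      exact ⟨tm, fun _ _ => ⟨h1, h2⟩⟩
    · exact ⟨0, fun a b => absurd ⟨a, b⟩ h⟩
  choose t ht using hst'
  set u : K := ∏ k ∈ Finset.range (p - 1), s (k + 1) with hu_def
  set v : K := ∏ k ∈ Finset.range (p - 1), t (k + 1) with hv_def
  have hmem : ∀ k ∈ Finset.range (p - 1), 1 ≤ k + 1 ∧ k + 1 < p := by
    intro k hk
    rw [Finset.mem_range] at hk
    omega
  have huO : u ∈ RO p K := prod_mem fun k _ => hsO (k + 1)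
  have hvO : v ∈ RO p K := prod_mem fun k hk => (ht (k + 1) (hmem k hk).1 (hmem k hk).2).1
  have huv : u * v = 1 := by
    rw [hu_def, hv_def, ← Finset.prod_mul_distrib]
    rw [Finset.prod_congr rfl fun k hk => (ht (k + 1) (hmem k hk).1 (hmem k hk).2).2]
    exact Finset.prod_const_one
  have hθ' : IsPrimitiveRoot θ ((p - 1) + 1) := by rwa [Nat.sub_add_cancel hp.one_le]
  have heven : Even (p - 1) := Nat.Odd.sub_odd (hp.odd_of_ne_two (by omega)) odd_one
  have hpu : (p : K) = (θ - 1) ^ (p - 1) * u := by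
    have hprod := hθ'.prod_one_sub_pow_eq_order
    have hL : ∏ k ∈ Finset.range (p - 1), (1 - θ ^ (k + 1))
        = ((-1) ^ (p - 1) * (θ - 1) ^ (p - 1)) * u := by
      rw [hu_def]
      have hfac : ∀ k ∈ Finset.range (p - 1), (1 : K) - θ ^ (k + 1)
          = ((-1) * (θ - 1)) * s (k + 1) := by
        intro k _
        rw [show (1 : K) - θ ^ (k + 1) = -(θ ^ (k + 1) - 1) by ring, hs_eq (k + 1)]
        ring
      rw [Finset.prod_congr rfl hfac, Finset.prod_mul_distrib, Finset.prod_const,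
        Finset.card_range, mul_pow]
    rw [hL, heven.neg_one_pow, one_mul] at hprod
    rw [hu_def] at hprod ⊢
    rw [hprod]
    push_cast [Nat.cast_sub hp.one_le]
    ring
  -- congruence of products modulo (θ - 1)
  have hcong : ∀ (F : Finset ℕ) (f g : ℕ → K), (∀ i ∈ F, f i ∈ RO p K) → (∀ i ∈ F, g i ∈ RO p K) →
      (∀ i ∈ F, ∃ o ∈ RO p K, f i - g i = (θ - 1) * o) →
      ∃ o ∈ RO p K, (∏ i ∈ F, f i) - (∏ i ∈ F, g i) = (θ - 1) * o := by
    intro F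
    induction F using Finset.induction_on with
    | empty => exact fun f g _ _ _ => ⟨0, zero_mem _, by simp⟩
    | @insert a F haF ih =>
      intro f g hf hg h
      obtain ⟨o1, ho1, he1⟩ := ih f g (fun i hi => hf i (Finset.mem_insert_of_mem hi))
        (fun i hi => hg i (Finset.mem_insert_of_mem hi))
        (fun i hi => h i (Finset.mem_insert_of_mem hi))
      obtain ⟨o2, ho2, he2⟩ := h a (Finset.mem_insert_self a F)
      refine ⟨f a * o1 + o2 * ∏ i ∈ F, g i,
        add_mem (mul_mem (hf a (Finset.mem_insert_self a F)) ho1)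
          (mul_mem ho2 (prod_mem fun i hi => hg i (Finset.mem_insert_of_mem hi))), ?_⟩
      rw [Finset.prod_insert haF, Finset.prod_insert haF]
      linear_combination f a * he1 + (∏ i ∈ F, g i) * he2
  have hfactor : ∀ k ∈ Finset.range (p - 1),
      ∃ o ∈ RO p K, s (k + 1) - ((k + 1 : ℕ) : K) = (θ - 1) * o := by
    intro k _
    refine ⟨∑ r ∈ Finset.range (k + 1), s r, sum_mem fun r _ => hsO r, ?_⟩
    calc s (k + 1) - ((k + 1 : ℕ) : K) = ∑ r ∈ Finset.range (k + 1), (θ ^ r - 1) := by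
          simp only [hs, Finset.sum_sub_distrib, Finset.sum_const, Finset.card_range,
            nsmul_eq_mul, mul_one, Nat.cast_add, Nat.cast_one]
      _ = ∑ r ∈ Finset.range (k + 1), (θ - 1) * s r := by
          refine Finset.sum_congr rfl fun r _ => ?_
          rw [hs_eq r]; ring
      _ = (θ - 1) * ∑ r ∈ Finset.range (k + 1), s r := by rw [Finset.mul_sum]
  obtain ⟨o, hoO, ho⟩ := hcong (Finset.range (p - 1)) (fun k => s (k + 1))
    (fun k => ((k + 1 : ℕ) : K)) (fun k _ => hsO (k + 1))
    (fun k _ => natCast_mem (RO p K) (k + 1)) hfactor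
  have hFeq : ∏ k ∈ Finset.range (p - 1), ((k + 1 : ℕ) : K) = (((p-1).factorial : ℕ) : K) := by
    rw [← Nat.cast_prod]
    exact_mod_cast congrArg (Nat.cast : ℕ → K) (Finset.prod_range_add_one_eq_factorial (p - 1))
  rw [hFeq] at ho
  have hW : ∃ c : ℕ, (p - 1).factorial + 1 = p * c := by
    have h0 : (((p - 1).factorial + 1 : ℕ) : ZMod p) = 0 := by
      push_cast [ZMod.wilsons_lemma]
      ring
    exact (ZMod.natCast_eq_zero_iff _ _).mp h0
  obtain ⟨c, hc⟩ := hW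
  have hFc : (((p - 1).factorial : ℕ) : K) + 1 = (p : K) * (c : K) := by exact_mod_cast congrArg (Nat.cast : ℕ → K) hc
  have hpow : (θ - 1) ^ (p - 1) = (θ - 1) ^ (p - 2) * (θ - 1) := by
    rw [← pow_succ]
    congr 1
    omega
  refine ⟨⟨u, v, o + (θ - 1) ^ (p - 2) * u * (c : K), huO, hvO,
    add_mem hoO (mul_mem (mul_mem (pow_mem hκO _) huO) (natCast_mem _ c)), hpu, huv, ?_⟩⟩
  linear_combination ho + hFc + (c : K) * hpu + (c : K) * u * hpow

theorem mem_Pp {θ x : K} {n : ℤ} : x ∈ Pp p K θ n ↔ (θ - 1) ^ (-n) * x ∈ RO p K := Iff.rfl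

theorem Pp_mul_mem {θ : K} (hκ : θ - 1 ≠ 0) {x y : K} {m n : ℤ}
    (hx : x ∈ Pp p K θ m) (hy : y ∈ Pp p K θ n) : x * y ∈ Pp p K θ (m + n) := by
  rw [mem_Pp] at *
  have he : (θ - 1) ^ (-(m + n)) * (x * y) = ((θ - 1) ^ (-m) * x) * ((θ - 1) ^ (-n) * y) := by
    rw [neg_add, zpow_add₀ hκ]; ring
  rw [he]; exact mul_mem hx hy

theorem RO_mul_Pp {θ o x : K} {n : ℤ} (ho : o ∈ RO p K) (hx : x ∈ Pp p K θ n) :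
    o * x ∈ Pp p K θ n := by
  rw [mem_Pp] at *
  rw [mul_left_comm]
  exact mul_mem ho hx

theorem Pp_mul_RO {θ o x : K} {n : ℤ} (hx : x ∈ Pp p K θ n) (ho : o ∈ RO p K) :
    x * o ∈ Pp p K θ n := by rw [mul_comm]; exact RO_mul_Pp ho hx

theorem Pp_antitone {θ : K} (hκO : θ - 1 ∈ RO p K) (hκ : θ - 1 ≠ 0) {m n : ℤ} (h : m ≤ n)
    {x : K} (hx : x ∈ Pp p K θ n) : x ∈ Pp p K θ m := by
  rw [mem_Pp] at *
  have he : (θ - 1) ^ (n - m) * ((θ - 1) ^ (-n) * x) = (θ - 1) ^ (-m) * x := by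
    rw [← mul_assoc, ← zpow_add₀ hκ, show n - m + -n = -m by ring]
  rw [← he]
  refine mul_mem ?_ hx
  rw [show (θ - 1) ^ (n - m) = (θ - 1) ^ ((n - m).toNat) from by
    rw [← zpow_natCast, Int.toNat_of_nonneg (by omega)]]
  exact pow_mem hκO _

theorem kzpow_mem {θ : K} (hκ : θ - 1 ≠ 0) (n : ℤ) : (θ - 1) ^ n ∈ Pp p K θ n := by
  rw [mem_Pp, ← zpow_add₀ hκ, neg_add_cancel, zpow_zero]
  exact one_mem _

theorem kpow_mem {θ : K} (hκ : θ - 1 ≠ 0) (j : ℕ) : (θ - 1) ^ j ∈ Pp p K θ (j : ℤ) := by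
  rw [← zpow_natCast]
  exact kzpow_mem hκ _

theorem p_inv_not_mem [Algebra ℚ_[p] K] [IsScalarTower ℤ_[p] ℚ_[p] K] :
    ((p : K))⁻¹ ∉ RO p K := by
  intro h
  have h2 : ((p : K))⁻¹ = algebraMap ℚ_[p] K (((p : ℚ_[p]))⁻¹) := by
    rw [map_inv₀, map_natCast]
  rw [h2] at h
  have h3 : IsIntegral ℤ_[p] (((p : ℚ_[p]))⁻¹) :=
    (isIntegral_algebraMap_iff (algebraMap ℚ_[p] K).injective).mp h
  obtain ⟨y, hy⟩ := IsIntegrallyClosed.isIntegral_iff.mp h3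
  have hpne : (p : ℚ_[p]) ≠ 0 := Nat.cast_ne_zero.mpr (Nat.Prime.ne_zero Fact.out)
  have h5 : y * (p : ℤ_[p]) = 1 := by
    apply IsFractionRing.injective ℤ_[p] ℚ_[p]
    rw [map_mul, map_one, hy, map_natCast, inv_mul_cancel₀ hpne]
  exact mem_nonunits_iff.mp PadicInt.p_nonunit (IsUnit.of_mul_eq_one _ (mul_comm y _ ▸ h5))

theorem kappa_inv_not_mem [Algebra ℚ_[p] K] [IsScalarTower ℤ_[p] ℚ_[p] K] {θ : K}
    (G : Good p K θ) (hκ : θ - 1 ≠ 0) : (θ - 1)⁻¹ ∉ RO p K := by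
  intro h
  apply p_inv_not_mem (p := p) (K := K)
  have hui : G.u⁻¹ = G.v := inv_eq_of_mul_eq_one_right G.huv
  rw [show ((p : K))⁻¹ = ((θ - 1)⁻¹) ^ (p - 1) * G.v from by rw [G.hpu, mul_inv, ← inv_pow, hui]]
  exact mul_mem (pow_mem h _) G.hv

theorem digit_dvd [Algebra ℚ_[p] K] [IsScalarTower ℤ_[p] ℚ_[p] K] {θ : K} (G : Good p K θ)
    (hκO : θ - 1 ∈ RO p K) (hκ : θ - 1 ≠ 0) (n : ℤ) (a : ℤ)
    (h : (a : K) * (θ - 1) ^ n ∈ Pp p K θ (n + 1)) : (p : ℤ) ∣ a := by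
  have hp : p.Prime := Fact.out
  by_contra hnd
  apply kappa_inv_not_mem G hκ
  have h1 : (a : K) * (θ - 1)⁻¹ ∈ RO p K := by
    rw [mem_Pp] at h
    have he : (θ - 1) ^ (-(n + 1)) * ((a : K) * (θ - 1) ^ n)
        = (a : K) * (θ - 1)⁻¹ := by
      rw [mul_left_comm, ← zpow_add₀ hκ, show -(n + 1) + n = -1 by ring, zpow_neg_one]
    rwa [he] at h
  have hnd' : ¬ (p ∣ a.natAbs) := fun hd =>
    hnd (Int.dvd_natAbs.mp (Int.natCast_dvd_natCast.mpr hd))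
  have hcop : IsCoprime a ((p : ℤ)) := by
    rw [Int.isCoprime_iff_gcd_eq_one]
    have : Nat.Coprime a.natAbs p := Nat.coprime_comm.mp ((Nat.Prime.coprime_iff_not_dvd hp).mpr hnd')
    simpa [Int.gcd, Int.natAbs_natCast] using this
  obtain ⟨x, y, hxy⟩ := hcop
  have hxyK : (x : K) * a + (y : K) * p = 1 := by exact_mod_cast congrArg (Int.cast : ℤ → K) hxy
  have hpκ : (p : K) * (θ - 1)⁻¹ ∈ RO p K := by
    have he2 : (p : K) * (θ - 1)⁻¹ = (θ - 1) ^ (p - 2) * G.u := by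
      rw [G.hpu, show p - 1 = (p - 2) + 1 from by have := hp.two_le; omega, pow_succ]
      field_simp
    rw [he2]; exact mul_mem (pow_mem hκO _) G.hu
  have he3 : (θ - 1)⁻¹ = (x : K) * ((a : K) * (θ - 1)⁻¹) + (y : K) * ((p : K) * (θ - 1)⁻¹) := by
    calc (θ - 1)⁻¹ = ((x : K) * a + (y : K) * p) * (θ - 1)⁻¹ := by rw [hxyK, one_mul]
      _ = _ := by ring
  rw [he3]
  exact add_mem (mul_mem (intCast_mem _ x) h1) (mul_mem (intCast_mem _ y) hpκ)

theorem nat_eq_of_zmod {p a b : ℕ} (ha : a < p) (hb : b < p) (h : (a : ZMod p) = b) : a = b := by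
  rw [← ZMod.val_cast_of_lt ha, ← ZMod.val_cast_of_lt hb, h]

end Aux

/-- Let `γ ∈ Ĥ_i` with offset `ρ = ρ(γ)` and `d = p - 1`.
Then for all `j, k ≥ i`:
(a) `a(j,j) = 0`; (b) `a(j,k) ≡ -a(k,j) mod p`;
(c) `a(j,k) = a(j+d,k) = a(j,k+d)`;
(d) `a(j,k) ≡ a(j+1,k) + a(j,k+1) mod p`;
(e) `a(j,j+1) = a(j,j+2)`; (f) `a(j,j+d-2) = a(j+d-1,j+d-2)`. -/
theorem stmt_8 (p : ℕ) [Fact p.Prime] (hp5 : 5 ≤ p)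
    (K : Type) [Field K] [Algebra ℚ_[p] K] [Algebra ℤ_[p] K]
    [IsScalarTower ℤ_[p] ℚ_[p] K]
    (θ : K) (hθ : IsPrimitiveRoot θ p)
    (hgen : Algebra.adjoin ℚ_[p] {θ} = ⊤)
    (i : ℕ) (γ : K → K → K) (hγ : MemHhat p K θ i γ)
    -- `ρ(j,k)` is defined by `γ(𝔭^j ∧ 𝔭^k) = 𝔭^(j+k+ρ(j,k))`
    (ρf : ℕ → ℕ → ℤ)
    (hρf : ∀ j k : ℕ, i ≤ j → i ≤ k →
      Submodule.span ℤ_[p] {w : K | ∃ x ∈ Pp p K θ j, ∃ y ∈ Pp p K θ k, γ x y = w}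
        = Pp p K θ ((j : ℤ) + k + ρf j k))
    -- the offset `ρ(γ) = min {ρ(j,k) | j, k ≥ i}`
    (ρ : ℤ) (hρ : IsLeast {z : ℤ | ∃ j k : ℕ, i ≤ j ∧ i ≤ k ∧ ρf j k = z} ρ)
    -- `a(j,k) ∈ {0,…,p-1}` is defined by
    -- `γ(κ^j ∧ κ^k) ≡ a(j,k)·κ^(j+k+ρ) mod 𝔭^(j+k+ρ+1)`
    (A : ℕ → ℕ → ℕ)
    (hA : ∀ j k : ℕ, i ≤ j → i ≤ k → A j k < p ∧
      γ ((θ - 1) ^ j) ((θ - 1) ^ k) - (A j k : K) * (θ - 1) ^ ((j : ℤ) + k + ρ)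
        ∈ Pp p K θ ((j : ℤ) + k + ρ + 1)) :
    (∀ j : ℕ, i ≤ j → A j j = 0) ∧
    (∀ j k : ℕ, i ≤ j → i ≤ k → (A j k : ZMod p) = -(A k j : ZMod p)) ∧
    (∀ j k : ℕ, i ≤ j → i ≤ k →
      A (j + (p - 1)) k = A j k ∧ A j (k + (p - 1)) = A j k) ∧
    (∀ j k : ℕ, i ≤ j → i ≤ k →
      (A j k : ZMod p) = (A (j + 1) k : ZMod p) + (A j (k + 1) : ZMod p)) ∧
    (∀ j : ℕ, i ≤ j → A j (j + 1) = A j (j + 2)) ∧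
    (∀ j : ℕ, i ≤ j → A j (j + (p - 1) - 2) = A (j + (p - 1) - 1) (j + (p - 1) - 2)) := by

  classical
  have hp : p.Prime := Fact.out
  have hp1 : 1 < p := by omega
  obtain ⟨G⟩ := good_nonempty hp5 hθ
  have hθO : θ ∈ RO p K := theta_mem hθ.pow_eq_one
  have hκO : θ - 1 ∈ RO p K := sub_mem hθO (one_mem _)
  have hκ : θ - 1 ≠ 0 := sub_ne_zero.mpr (hθ.ne_one hp1)
  have hmem : ∀ j : ℕ, i ≤ j → (θ - 1) ^ j ∈ Pp p K θ (i : ℤ) :=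
    fun j hj => Pp_antitone hκO hκ (by exact_mod_cast hj) (kpow_mem hκ j)
  have hdig : ∀ (n a : ℤ), (a : K) * (θ - 1) ^ n ∈ Pp p K θ (n + 1) → (p : ℤ) ∣ a :=
    digit_dvd G hκO hκ
  have hbound : ∀ j k : ℕ, i ≤ j → i ≤ k → ∀ x ∈ Pp p K θ (j : ℤ), ∀ y ∈ Pp p K θ (k : ℤ),
      γ x y ∈ Pp p K θ ((j : ℤ) + k + ρ) := by
    intro j k hj hk x hx y hy
    have h2 : γ x y ∈ Submodule.span ℤ_[p]
        {w : K | ∃ x ∈ Pp p K θ (j : ℤ), ∃ y ∈ Pp p K θ (k : ℤ), γ x y = w} :=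
      Submodule.subset_span ⟨x, hx, y, hy, rfl⟩
    rw [hρf j k hj hk] at h2
    exact Pp_antitone hκO hκ (by have := hρ.2 ⟨j, k, hj, hk, rfl⟩; omega) h2
  -- part (a)
  have hA0 : ∀ j : ℕ, i ≤ j → A j j = 0 := by
    intro j hj
    have h1 := (hA j j hj hj).2
    rw [hγ.alternating _ (hmem j hj)] at h1
    have h2 : ((-(A j j : ℤ) : ℤ) : K) * (θ - 1) ^ ((j : ℤ) + j + ρ)
        ∈ Pp p K θ ((j : ℤ) + j + ρ + 1) := by
      have he : ((-(A j j : ℤ) : ℤ) : K) * (θ - 1) ^ ((j : ℤ) + j + ρ)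
          = 0 - (A j j : K) * (θ - 1) ^ ((j : ℤ) + j + ρ) := by push_cast; ring
    
      rw [he]
      exact h1
    have h3 := hdig _ _ h2
    have h4 : (p : ℤ) ∣ (A j j : ℤ) := dvd_neg.mp h3
    have h5 : p ∣ A j j := by exact_mod_cast h4
    rcases Nat.eq_zero_or_pos (A j j) with h | h
    · exact h
    · exact absurd (Nat.le_of_dvd h h5) (by have := (hA j j hj hj).1; omega)
  -- part (b)
  have hanti : ∀ j k : ℕ, i ≤ j → i ≤ k → (p : ℤ) ∣ ((A j k : ℤ) + (A k j : ℤ)) := by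
    intro j k hj hk
    have q1 := (hA j k hj hk).2
    have q2 := (hA k j hk hj).2
    have hswap : (k : ℤ) + j + ρ = (j : ℤ) + k + ρ := by ring
    rw [hswap] at q2
    have mj := hmem j hj
    have mk := hmem k hk
    have halt : γ ((θ - 1) ^ j) ((θ - 1) ^ k) + γ ((θ - 1) ^ k) ((θ - 1) ^ j) = 0 := by
      have h0 := hγ.alternating _ (add_mem mj mk)
      rw [hγ.add_right _ (add_mem mj mk) _ mj _ mk,
        hγ.add_left _ mj _ mk _ mj, hγ.add_left _ mj _ mk _ mk,
        hγ.alternating _ mj, hγ.alternating _ mk] at h0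
      linear_combination h0
    have h2 : (((-(A j k : ℤ) - (A k j : ℤ)) : ℤ) : K) * (θ - 1) ^ ((j : ℤ) + k + ρ)
        ∈ Pp p K θ ((j : ℤ) + k + ρ + 1) := by
      have he : (((-(A j k : ℤ) - (A k j : ℤ)) : ℤ) : K) * (θ - 1) ^ ((j : ℤ) + k + ρ)
          = (γ ((θ - 1) ^ j) ((θ - 1) ^ k) - (A j k : K) * (θ - 1) ^ ((j : ℤ) + k + ρ))
            + (γ ((θ - 1) ^ k) ((θ - 1) ^ j) - (A k j : K) * (θ - 1) ^ ((j : ℤ) + k + ρ)) := by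
        push_cast
        linear_combination -halt
      rw [he]
      exact add_mem q1 q2
    have h3 := hdig _ _ h2
    have he2 : -((A j k : ℤ) + (A k j : ℤ)) = -(A j k : ℤ) - (A k j : ℤ) := by ring
    exact dvd_neg.mp (he2 ▸ h3)
  have hbzmod : ∀ j k : ℕ, i ≤ j → i ≤ k → (A j k : ZMod p) = -(A k j : ZMod p) := by
    intro j k hj hk
    have h0 : ((((A j k : ℤ) + (A k j : ℤ)) : ℤ) : ZMod p) = 0 :=
      (ZMod.intCast_zmod_eq_zero_iff_dvd _ _).mpr (hanti j k hj hk)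
    push_cast at h0
    exact eq_neg_of_add_eq_zero_left h0
  -- part (d)
  have hd_dvd : ∀ j k : ℕ, i ≤ j → i ≤ k →
      (p : ℤ) ∣ ((A (j + 1) k : ℤ) + (A j (k + 1) : ℤ) - (A j k : ℤ)) := by
    intro j k hj hk
    set s : ℤ := (j : ℤ) + k + ρ with hs
    have hz : (θ - 1) ^ (s + 1) = (θ - 1) ^ s * (θ - 1) := zpow_add_one₀ hκ s
    have mj := hmem j hj
    have mk := hmem k hk
    have mj1 := hmem (j + 1) (by omega)
    have mk1 := hmem (k + 1) (by omega)
    have hteq := hγ.theta_equiv _ mj _ mk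
    have hde : ∀ m : ℕ, θ * (θ - 1) ^ m = (θ - 1) ^ m + (θ - 1) ^ (m + 1) := by
      intro m; rw [pow_succ]; ring
    rw [hde j, hde k, hγ.add_left _ mj _ mj1 _ (add_mem mk mk1),
      hγ.add_right _ mj _ mk _ mk1, hγ.add_right _ mj1 _ mk _ mk1] at hteq
    have q0 := (hA j k hj hk).2
    rw [show (j : ℤ) + k + ρ = s from hs.symm] at q0
    have m1 := (hA (j + 1) k (by omega) hk).2
    have e1 : ((j + 1 : ℕ) : ℤ) + k + ρ = s + 1 := by push_cast; omega
    rw [e1, hz, show (s + 1 + 1 : ℤ) = s + 2 by ring] at m1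
    have m2 := (hA j (k + 1) hj (by omega)).2
    have e2 : (j : ℤ) + ((k + 1 : ℕ) : ℤ) + ρ = s + 1 := by push_cast; omega
    rw [e2, hz, show (s + 1 + 1 : ℤ) = s + 2 by ring] at m2
    have m3 := hbound (j + 1) (k + 1) (by omega) (by omega) _ (kpow_mem hκ (j + 1))
      _ (kpow_mem hκ (k + 1))
    have e3 : ((j + 1 : ℕ) : ℤ) + ((k + 1 : ℕ) : ℤ) + ρ = s + 2 := by push_cast; omega
    rw [e3] at m3
    have h1P : (θ - 1) ∈ Pp p K θ (1 : ℤ) := by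
      have := kzpow_mem (p := p) hκ 1
      rwa [zpow_one] at this
    have m4 := Pp_mul_mem hκ h1P q0
    rw [show (1 : ℤ) + (s + 1) = s + 2 by ring] at m4
    have hfin : (((A (j + 1) k : ℤ) + (A j (k + 1) : ℤ) - (A j k : ℤ) : ℤ) : K)
        * ((θ - 1) ^ s * (θ - 1)) ∈ Pp p K θ (s + 2) := by
      have he : (((A (j + 1) k : ℤ) + (A j (k + 1) : ℤ) - (A j k : ℤ) : ℤ) : K)
          * ((θ - 1) ^ s * (θ - 1))
          = ((θ - 1) * (γ ((θ - 1) ^ j) ((θ - 1) ^ k) - (A j k : K) * (θ - 1) ^ s))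
            - (γ ((θ - 1) ^ (j + 1)) ((θ - 1) ^ k) - (A (j + 1) k : K) * ((θ - 1) ^ s * (θ - 1)))
            - (γ ((θ - 1) ^ j) ((θ - 1) ^ (k + 1)) - (A j (k + 1) : K) * ((θ - 1) ^ s * (θ - 1)))
            - γ ((θ - 1) ^ (j + 1)) ((θ - 1) ^ (k + 1)) := by
        push_cast
        linear_combination hteq
      rw [he]
      exact sub_mem (sub_mem (sub_mem m4 m1) m2) m3
    have hfin' : (((A (j + 1) k : ℤ) + (A j (k + 1) : ℤ) - (A j k : ℤ) : ℤ) : K)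
        * (θ - 1) ^ (s + 1) ∈ Pp p K θ ((s + 1) + 1) := by
      rw [hz, show (s + 1 + 1 : ℤ) = s + 2 by ring]
      exact hfin
    exact hdig _ _ hfin'
  have hdzmod : ∀ j k : ℕ, i ≤ j → i ≤ k →
      (A j k : ZMod p) = (A (j + 1) k : ZMod p) + (A j (k + 1) : ZMod p) := by
    intro j k hj hk
    have h0 : ((((A (j + 1) k : ℤ) + (A j (k + 1) : ℤ) - (A j k : ℤ)) : ℤ) : ZMod p) = 0 :=
      (ZMod.intCast_zmod_eq_zero_iff_dvd _ _).mpr (hd_dvd j k hj hk)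
    push_cast at h0
    linear_combination -h0
  -- part (c), left
  have hcL : ∀ j k : ℕ, i ≤ j → i ≤ k → A (j + (p - 1)) k = A j k := by
    intro j k hj hk
    set d : ℕ := p - 1 with hd
    set s : ℤ := (j : ℤ) + k + ρ with hs
    have mj := hmem j hj
    have mk := hmem k hk
    have hpu' : (p : K) = (θ - 1) ^ d * G.u := G.hpu
    have hzO : (θ - 1) ^ d + (p : K) = (θ - 1) ^ (d + 1) * G.w := by
      rw [hpu', pow_succ]
      linear_combination ((θ - 1) ^ d) * G.hw1
    have hzP : (θ - 1) ^ j * ((θ - 1) ^ d + (p : K)) ∈ Pp p K θ ((j + d + 1 : ℕ) : ℤ) := by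
      rw [hzO, ← mul_assoc, ← pow_add]
      exact Pp_mul_RO (kpow_mem hκ (j + (d + 1))) G.hw
    have hzPi : (θ - 1) ^ j * ((θ - 1) ^ d + (p : K)) ∈ Pp p K θ (i : ℤ) :=
      Pp_antitone hκO hκ (by exact_mod_cast le_trans hj (by omega)) hzP
    have hsmulmem : ((-(p : ℕ) : ℤ_[p])) • ((θ - 1) ^ j) ∈ Pp p K θ (i : ℤ) :=
      Submodule.smul_mem _ _ mj
    have hdecomp : (θ - 1) ^ (j + d)
        = (θ - 1) ^ j * ((θ - 1) ^ d + (p : K)) + ((-(p : ℕ) : ℤ_[p])) • ((θ - 1) ^ j) := by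
      rw [Algebra.smul_def, map_neg, map_natCast, pow_add]
      ring
    have hexp := hγ.theta_equiv
    have hexp2 : γ ((θ - 1) ^ (j + d)) ((θ - 1) ^ k)
        = γ ((θ - 1) ^ j * ((θ - 1) ^ d + (p : K))) ((θ - 1) ^ k)
          - (p : K) * γ ((θ - 1) ^ j) ((θ - 1) ^ k) := by
      rw [hdecomp, hγ.add_left _ hzPi _ hsmulmem _ mk, hγ.smul_left _ _ mj _ mk,
        Algebra.smul_def, map_neg, map_natCast]
      ring
    -- memberships
    have M1 := (hA (j + d) k (by omega) hk).2
    have eM1 : ((j + d : ℕ) : ℤ) + k + ρ = s + (d : ℤ) := by push_cast; omega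
    rw [eM1] at M1
    have hzd : (θ - 1) ^ (s + (d : ℤ)) = (θ - 1) ^ s * (θ - 1) ^ d := by
      rw [zpow_add₀ hκ, zpow_natCast]
    rw [hzd] at M1
    have M2 := hbound (j + d + 1) k (by omega) hk _ hzP _ (kpow_mem hκ k)
    have eM2 : ((j + d + 1 : ℕ) : ℤ) + k + ρ = s + (d : ℤ) + 1 := by push_cast; omega
    rw [eM2] at M2
    have q0 := (hA j k hj hk).2
    rw [show (j : ℤ) + k + ρ = s from hs.symm] at q0
    have M3 : (p : K) * (γ ((θ - 1) ^ j) ((θ - 1) ^ k) - (A j k : K) * (θ - 1) ^ s)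
        ∈ Pp p K θ (s + (d : ℤ) + 1) := by
      have he : (p : K) * (γ ((θ - 1) ^ j) ((θ - 1) ^ k) - (A j k : K) * (θ - 1) ^ s)
          = (θ - 1) ^ d * (G.u * (γ ((θ - 1) ^ j) ((θ - 1) ^ k) - (A j k : K) * (θ - 1) ^ s)) := by
        rw [hpu']; ring
      rw [he]
      have := Pp_mul_mem hκ (kpow_mem hκ d) (RO_mul_Pp G.hu q0)
      rwa [show (d : ℤ) + (s + 1) = s + (d : ℤ) + 1 by ring] at this
    have M4 : (A j k : K) * ((θ - 1) ^ s * ((θ - 1) ^ (d + 1) * G.w))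
        ∈ Pp p K θ (s + (d : ℤ) + 1) := by
      have := RO_mul_Pp (natCast_mem (RO p K) (A j k))
        (Pp_mul_mem hκ (kzpow_mem hκ s) (Pp_mul_RO (kpow_mem hκ (d + 1)) G.hw))
      rwa [show s + ((d + 1 : ℕ) : ℤ) = s + (d : ℤ) + 1 by push_cast; ring] at this
    have hfin : (((A j k : ℤ) - (A (j + d) k : ℤ) : ℤ) : K) * ((θ - 1) ^ s * (θ - 1) ^ d)
        ∈ Pp p K θ (s + (d : ℤ) + 1) := by
      have he : (((A j k : ℤ) - (A (j + d) k : ℤ) : ℤ) : K) * ((θ - 1) ^ s * (θ - 1) ^ d)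
          = (γ ((θ - 1) ^ (j + d)) ((θ - 1) ^ k) - (A (j + d) k : K) * ((θ - 1) ^ s * (θ - 1) ^ d))
            - γ ((θ - 1) ^ j * ((θ - 1) ^ d + (p : K))) ((θ - 1) ^ k)
            + (p : K) * (γ ((θ - 1) ^ j) ((θ - 1) ^ k) - (A j k : K) * (θ - 1) ^ s)
            + (A j k : K) * ((θ - 1) ^ s * ((θ - 1) ^ (d + 1) * G.w)) := by
        push_cast
        linear_combination -hexp2 + (A j k : K) * (θ - 1) ^ s * hzO
      rw [he]
      exact add_mem (add_mem (sub_mem M1 M2) M3) M4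
    have hfin' : (((A j k : ℤ) - (A (j + d) k : ℤ) : ℤ) : K) * (θ - 1) ^ (s + (d : ℤ))
        ∈ Pp p K θ ((s + (d : ℤ)) + 1) := by
      rw [hzd]
      exact hfin
    have hdvd := hdig _ _ hfin'
    have h0 : ((((A j k : ℤ) - (A (j + d) k : ℤ)) : ℤ) : ZMod p) = 0 :=
      (ZMod.intCast_zmod_eq_zero_iff_dvd _ _).mpr hdvd
    push_cast at h0
    have hzz : (A (j + d) k : ZMod p) = (A j k : ZMod p) := by linear_combination -h0
    exact nat_eq_of_zmod (hA (j + d) k (by omega) hk).1 (hA j k hj hk).1 hzz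
  -- part (c), right
  have hcR : ∀ j k : ℕ, i ≤ j → i ≤ k → A j (k + (p - 1)) = A j k := by
    intro j k hj hk
    have h1 := hbzmod j (k + (p - 1)) hj (by omega)
    rw [hcL k j hk hj] at h1
    have h2 := hbzmod j k hj hk
    have : (A j (k + (p - 1)) : ZMod p) = (A j k : ZMod p) := by rw [h1, h2]
    exact nat_eq_of_zmod (hA j (k + (p - 1)) hj (by omega)).1 (hA j k hj hk).1 this
  refine ⟨hA0, hbzmod, fun j k hj hk => ⟨hcL j k hj hk, hcR j k hj hk⟩, hdzmod, ?_, ?_⟩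
  -- part (e)
  · intro j hj
    have hd := hdzmod j (j + 1) hj (by omega)
    rw [hA0 (j + 1) (by omega)] at hd
    rw [show j + 1 + 1 = j + 2 from rfl] at hd
    push_cast at hd
    rw [zero_add] at hd
    exact nat_eq_of_zmod (hA j (j + 1) hj (by omega)).1 (hA j (j + 2) hj (by omega)).1 hd
  -- part (f)
  · intro j hj
    have h1 : j + (p - 1) - 2 = j + (p - 3) := by omega
    have h2 : j + (p - 1) - 1 = j + (p - 2) := by omega
    rw [h1, h2]
    have hd := hdzmod (j + (p - 2)) (j + (p - 3)) (by omega) (by omega)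
    have e1 : j + (p - 2) + 1 = j + (p - 1) := by omega
    have e2 : j + (p - 3) + 1 = j + (p - 2) := by omega
    rw [e1, e2, hA0 (j + (p - 2)) (by omega)] at hd
    have hc' := hcL j (j + (p - 3)) hj (by omega)
    rw [hc'] at hd
    push_cast at hd
    rw [add_zero] at hd
    exact (nat_eq_of_zmod (hA (j + (p - 2)) (j + (p - 3)) (by omega) (by omega)).1
      (hA j (j + (p - 3)) hj (by omega)).1 hd).symm
end

section
/- Let γ ∈ Ĥ_i with offset ρ = ρ(γ) and let d = p − 1. If there exist j, k, l ∈ {i, …, i+d−1} with J(j,k,l) ≠ 0, then λ(γ) is finite and λ(γ) ≤ 3i + 3d − 6 + 2ρ. -/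
/-- The Jacobi element `J_γ(u,v,w) = γ(γ(u∧v)∧w) + γ(γ(v∧w)∧u) + γ(γ(w∧u)∧v)`. -/
def Jg (K : Type) [Field K] (γ : K → K → K) (u v w : K) : K :=
  γ (γ u v) w + γ (γ v w) u + γ (γ w u) v

/-- The ideal `J(γ)` of `O` generated by the Jacobi elements
`J_γ(u,v,w)` for `u, v, w ∈ 𝔭^i` (encoded as the set of `O`-linear
combinations of Jacobi elements). -/
def JIdealSet (p : ℕ) [Fact p.Prime] (K : Type) [Field K] [Algebra ℤ_[p] K]
    (θ : K) (i : ℕ) (γ : K → K → K) : Set K :=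
  {z : K | ∃ (n : ℕ) (c s : Fin n → K), (∀ t, c t ∈ RO p K) ∧
    (∀ t, ∃ u ∈ Pp p K θ i, ∃ v ∈ Pp p K θ i, ∃ w ∈ Pp p K θ i, Jg K γ u v w = s t) ∧
    z = ∑ t, c t * s t}

namespace Stmt10Aux

open Polynomial Finset

variable {p : ℕ} [Fact p.Prime] {K : Type} [Field K] [Algebra ℚ_[p] K] [Algebra ℤ_[p] K]
  [IsScalarTower ℤ_[p] ℚ_[p] K] {θ : K}

lemma hp1 : 1 < p := (Fact.out : p.Prime).one_lt

lemma theta_mem (hθ : IsPrimitiveRoot θ p) : θ ∈ RO p K := by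
  rw [RO, mem_integralClosure_iff]
  refine ⟨X ^ p - 1, ?_, ?_⟩
  · have := monic_X_pow_sub_C (R := ℤ_[p]) (1:ℤ_[p]) ((Fact.out : p.Prime).ne_zero)
    simpa using this
  · simp [hθ.pow_eq_one]

lemma kappa_mem (hθ : IsPrimitiveRoot θ p) : θ - 1 ∈ RO p K :=
  sub_mem (theta_mem hθ) (one_mem _)

lemma kappa_ne_zero (hθ : IsPrimitiveRoot θ p) : θ - 1 ≠ 0 :=
  sub_ne_zero.mpr (hθ.ne_one hp1)

lemma geom_theta (hθ : IsPrimitiveRoot θ p) : ∑ j ∈ range p, θ ^ j = 0 := by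
  have h := geom_sum_mul θ p
  rw [hθ.pow_eq_one, sub_self] at h
  exact (mul_eq_zero.mp h).resolve_right (kappa_ne_zero hθ)

/-- For any `p`-th root of unity `μ`, the ratio `(1-μ)/(1-θ)` is integral. -/
lemma ratio_mem (hθ : IsPrimitiveRoot θ p) {μ : K} (hμ : μ ^ p = 1) :
    (1 - μ) / (1 - θ) ∈ RO p K := by
  obtain ⟨a, -, rfl⟩ := hθ.eq_pow_of_pow_eq_one hμ
  have h : (1 : K) - θ ^ a = (1 - θ) * ∑ j ∈ range a, θ ^ j := by
    have := geom_sum_mul θ a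
    have h2 : (1-θ) * ∑ j ∈ range a, θ ^ j = -((∑ j ∈ range a, θ ^ j) * (θ - 1)) := by ring
    rw [h2, this]; ring
  have hθ1 : (1:K) - θ ≠ 0 := by
    have := kappa_ne_zero hθ; intro h'; apply this; linear_combination -h'
  rw [h, mul_div_cancel_left₀ _ hθ1]
  exact sum_mem fun j _ => pow_mem (theta_mem hθ) j

lemma exists_unit_p (hθ : IsPrimitiveRoot θ p) (hp5 : 5 ≤ p) :
    ∃ v w : K, v ∈ RO p K ∧ w ∈ RO p K ∧ v * w = 1 ∧ (p : K) = (θ - 1) ^ (p - 1) * v := by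
  have hpos : 0 < p := lt_trans Nat.zero_lt_one hp1
  have hprim : ∀ μ ∈ primitiveRoots p K, IsPrimitiveRoot μ p :=
    fun μ h => (mem_primitiveRoots hpos).mp h
  have hcard : (primitiveRoots p K).card = p - 1 := by
    rw [hθ.card_primitiveRoots, Nat.totient_prime Fact.out]
  have hpK : (p : K) = ∏ μ ∈ primitiveRoots p K, (1 - μ) := by
    have h1 := Polynomial.eval_one_cyclotomic_prime (R := K) (p := p)
    rw [cyclotomic_eq_prod_X_sub_primitiveRoots hθ, eval_prod] at h1
    rw [← h1]
    simp
  have hθ1 : (1:K) - θ ≠ 0 := fun h' => (kappa_ne_zero hθ) (by linear_combination -h')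
  have hμ1 : ∀ μ ∈ primitiveRoots p K, (1:K) - μ ≠ 0 := by
    intro μ hm h'
    exact ((hprim μ hm).ne_one hp1) (by linear_combination -h')
  refine ⟨∏ μ ∈ primitiveRoots p K, (1 - μ)/(1 - θ), ∏ μ ∈ primitiveRoots p K, (1 - θ)/(1 - μ),
    ?_, ?_, ?_, ?_⟩
  · exact prod_mem fun μ hm => ratio_mem hθ ((hprim μ hm).pow_eq_one)
  · exact prod_mem fun μ hm => ratio_mem (hprim μ hm) hθ.pow_eq_one
  · rw [← prod_mul_distrib]
    refine prod_eq_one fun μ hm => ?_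
    field_simp
    exact div_self (hμ1 μ hm)
  · have heven : Even (p - 1) := by
      have hodd : Odd p := (Fact.out : p.Prime).odd_of_ne_two (by omega)
      exact Nat.Odd.sub_odd hodd odd_one
    have h2 : (θ - 1) ^ (p-1) = (1 - θ) ^ (p-1) := by
      rw [show (θ - 1 : K) = -(1 - θ) by ring, neg_pow, heven.neg_one_pow, one_mul]
    have h3 : ∏ μ ∈ primitiveRoots p K, ((1:K) - μ)
        = (1 - θ) ^ (p - 1) * ∏ μ ∈ primitiveRoots p K, (1 - μ)/(1 - θ) := by
      rw [← hcard, ← prod_const, ← prod_mul_distrib]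
      refine prod_congr rfl fun μ hm => ?_
      field_simp
    rw [hpK, h3, h2]
end Stmt10Aux

namespace Stmt10Aux

open Polynomial Finset

variable {p : ℕ} [Fact p.Prime] {K : Type} [Field K] [Algebra ℚ_[p] K] [Algebra ℤ_[p] K]
  [IsScalarTower ℤ_[p] ℚ_[p] K] {θ : K}

lemma p_inv_not_mem : ((p : K))⁻¹ ∉ RO p K := by
  intro h
  rw [RO, mem_integralClosure_iff] at h
  have hinj : Function.Injective (algebraMap ℚ_[p] K) := (algebraMap ℚ_[p] K).injective
  have h1 : ((p:K))⁻¹ = algebraMap ℚ_[p] K ((p:ℚ_[p]))⁻¹ := by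
    rw [map_inv₀, map_natCast]
  rw [h1] at h
  have h2 : IsIntegral ℤ_[p] ((p:ℚ_[p]))⁻¹ := (isIntegral_algebraMap_iff hinj).mp h
  obtain ⟨y, hy⟩ := IsIntegrallyClosed.isIntegral_iff.mp h2
  have hp0 : (p:ℚ_[p]) ≠ 0 := Nat.cast_ne_zero.mpr ((Fact.out : p.Prime).ne_zero)
  have h3 : (p:ℤ_[p]) * y = 1 := by
    have : algebraMap ℤ_[p] ℚ_[p] ((p:ℤ_[p]) * y) = algebraMap ℤ_[p] ℚ_[p] 1 := by
      rw [map_mul, map_one, map_natCast, hy, mul_inv_cancel₀ hp0]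
    exact (IsFractionRing.injective ℤ_[p] ℚ_[p]) this
  have h4 : IsUnit (p:ℤ_[p]) := IsUnit.of_mul_eq_one _ h3
  rw [PadicInt.isUnit_iff, PadicInt.norm_p] at h4
  have hp2' : 2 ≤ p := hp1
  have hp2 : (2:ℝ) ≤ (p:ℝ) := by exact_mod_cast hp2'
  have : (p:ℝ)⁻¹ < 1 := by
    rw [inv_lt_one_iff₀]; right; linarith
  rw [h4] at this; exact lt_irrefl _ this

lemma kappa_inv_not_mem (hθ : IsPrimitiveRoot θ p) (hp5 : 5 ≤ p) : (θ - 1)⁻¹ ∉ RO p K := by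
  intro h
  obtain ⟨v, w, hv, hw, hvw, hp⟩ := exists_unit_p hθ hp5
  apply p_inv_not_mem (p := p) (K := K)
  have hk := kappa_ne_zero hθ
  have hv0 : v ≠ 0 := fun h0 => by simp [h0] at hvw
  have : ((p:K))⁻¹ = ((θ-1)⁻¹)^(p-1) * w := by
    rw [hp, mul_inv, inv_pow]
    congr 1
    exact inv_eq_of_mul_eq_one_right hvw
  rw [this]
  exact mul_mem (pow_mem h _) hw

lemma zpow_mem (hθ : IsPrimitiveRoot θ p) {c : ℤ} (hc : 0 ≤ c) : (θ - 1) ^ c ∈ RO p K := by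
  lift c to ℕ using hc
  rw [zpow_natCast]
  exact pow_mem (kappa_mem hθ) _

lemma zpow_not_mem (hθ : IsPrimitiveRoot θ p) (hp5 : 5 ≤ p) {c : ℤ} (hc : c < 0) :
    (θ - 1) ^ c ∉ RO p K := by
  intro h
  apply kappa_inv_not_mem hθ hp5
  have hk := kappa_ne_zero hθ
  have : (θ - 1)⁻¹ = (θ-1)^c * (θ-1)^(-1-c) := by
    rw [← zpow_add₀ hk, show c + (-1-c) = -1 by ring, zpow_neg_one]
  rw [this]
  exact mul_mem h (zpow_mem hθ (by omega))

lemma mem_Pp_iff {n : ℤ} {x : K} : x ∈ Pp p K θ n ↔ (θ - 1) ^ (-n) * x ∈ RO p K := Iff.rfl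

lemma Pp_mono (hθ : IsPrimitiveRoot θ p) {n m : ℤ} (h : n ≤ m) :
    Pp p K θ m ≤ Pp p K θ n := by
  intro x hx
  rw [mem_Pp_iff] at hx ⊢
  have hk := kappa_ne_zero hθ
  have : (θ-1)^(-n) * x = (θ-1)^(m-n) * ((θ-1)^(-m) * x) := by
    rw [← mul_assoc, ← zpow_add₀ hk]
    congr 2
    ring
  rw [this]
  exact mul_mem (zpow_mem hθ (by omega)) hx

lemma zpow_mem_Pp (hθ : IsPrimitiveRoot θ p) {a b : ℤ} (h : b ≤ a) :
    (θ - 1) ^ a ∈ Pp p K θ b := by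
  rw [mem_Pp_iff, ← zpow_add₀ (kappa_ne_zero hθ)]
  exact zpow_mem hθ (by omega)

lemma O_mul_mem_Pp {n : ℤ} {c x : K} (hc : c ∈ RO p K) (hx : x ∈ Pp p K θ n) :
    c * x ∈ Pp p K θ n := by
  rw [mem_Pp_iff] at hx ⊢
  rw [mul_left_comm]
  exact mul_mem hc hx

lemma nat_mul_not_mem (hθ : IsPrimitiveRoot θ p) (hp5 : 5 ≤ p) {c : ℕ} (hc : ¬ p ∣ c)
    {m : ℤ} : (c:K) * (θ - 1) ^ m ∉ Pp p K θ (m+1) := by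
  intro h
  rw [mem_Pp_iff] at h
  have hk := kappa_ne_zero hθ
  have h1 : (c:K) * (θ-1)⁻¹ ∈ RO p K := by
    have : (θ-1)^(-(m+1)) * ((c:K) * (θ-1)^m) = (c:K) * (θ-1)⁻¹ := by
      rw [mul_left_comm, ← zpow_add₀ hk, show -(m+1) + m = -1 by ring, zpow_neg_one]
    rwa [this] at h
  -- Bezout
  have hcop : Nat.Coprime p c := ((Fact.out : p.Prime).coprime_iff_not_dvd).mpr hc
  obtain ⟨u, v, huv⟩ := Nat.isCoprime_iff_coprime.mpr hcop
  apply kappa_inv_not_mem hθ hp5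
  obtain ⟨vK, wK, hv, hw, hvw, hp⟩ := exists_unit_p hθ hp5
  have hpk : (p:K) * (θ-1)⁻¹ ∈ RO p K := by
    have : (p:K) * (θ-1)⁻¹ = (θ-1)^(p-2) * vK := by
      rw [hp, show p - 1 = (p-2) + 1 by omega, pow_succ]
      field_simp
    rw [this]
    exact mul_mem (pow_mem (kappa_mem hθ) _) hv
  have hbez : (θ-1)⁻¹ = (u:K) * ((p:K) * (θ-1)⁻¹) + (v:K) * ((c:K) * (θ-1)⁻¹) := by
    have hcast : ((u * p + v * c : ℤ) : K) = ((1:ℤ):K) := by rw [huv]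
    push_cast at hcast
    linear_combination ((θ-1)⁻¹) * hcast.symm
  rw [hbez]
  exact add_mem (mul_mem (intCast_mem _ u) hpk) (mul_mem (intCast_mem _ v) h1)

lemma nat_dvd_of_mem (hθ : IsPrimitiveRoot θ p) (hp5 : 5 ≤ p) {c : ℕ} {m : ℤ}
    (h : (c:K) * (θ - 1) ^ m ∈ Pp p K θ (m+1)) : p ∣ c := by
  by_contra hc
  exact nat_mul_not_mem hθ hp5 hc h

end Stmt10Aux

namespace Stmt10Aux

open Polynomial Finset

variable {p : ℕ} [Fact p.Prime] {K : Type} [Field K] [Algebra ℚ_[p] K] [Algebra ℤ_[p] K]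
  [IsScalarTower ℤ_[p] ℚ_[p] K] {θ : K}

/-- The Eisenstein polynomial `((X+1)^p - 1)/X`. -/
noncomputable def Phi (p : ℕ) [Fact p.Prime] : ℤ_[p][X] := ∑ j ∈ range p, (X + 1) ^ j

lemma Phi_mul_X : Phi p * X = (X + 1) ^ p - 1 := by
  have h := geom_sum_mul (X + 1 : ℤ_[p][X]) p
  simpa [Phi] using h

lemma Phi_coeff (k : ℕ) : (Phi p).coeff k = (p.choose (k+1) : ℤ_[p]) := by
  have h1 : (Phi p * X).coeff (k+1) = (Phi p).coeff k := coeff_mul_X _ _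
  rw [Phi_mul_X] at h1
  rw [← h1, coeff_sub, coeff_X_add_one_pow, coeff_one]
  simp

lemma Phi_natDegree_le : (Phi p).natDegree ≤ p - 1 := by
  rw [natDegree_le_iff_coeff_eq_zero]
  intro m hm
  rw [Phi_coeff, Nat.choose_eq_zero_of_lt (by omega)]
  simp

lemma Phi_coeff_top : (Phi p).coeff (p - 1) = 1 := by
  rw [Phi_coeff, show p - 1 + 1 = p by have := hp1 (p := p); omega, Nat.choose_self]
  simp

lemma Phi_natDegree : (Phi p).natDegree = p - 1 := by
  refine le_antisymm Phi_natDegree_le (le_natDegree_of_ne_zero ?_)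
  rw [Phi_coeff_top]
  exact one_ne_zero

lemma Phi_monic : (Phi p).Monic := by
  rw [Monic, leadingCoeff, Phi_natDegree, Phi_coeff_top]

lemma Phi_ne_zero : (Phi p) ≠ 0 := Phi_monic.ne_zero

lemma Phi_degree : (Phi p).degree = ((p - 1 : ℕ) : WithBot ℕ) := by
  rw [degree_eq_natDegree Phi_ne_zero, Phi_natDegree]

lemma p_not_unit : ¬ IsUnit (p : ℤ_[p]) := (PadicInt.prime_p).not_unit

lemma Phi_irreducible : Irreducible (Phi p) := by
  have hprime : Prime (p : ℤ_[p]) := PadicInt.prime_p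
  have hPprime : Ideal.IsPrime (Ideal.span {(p : ℤ_[p])}) :=
    (Ideal.span_singleton_prime hprime.ne_zero).mpr hprime
  refine Polynomial.irreducible_of_eisenstein_criterion hPprime ?_ ?_ ?_ ?_ ?_
  · rw [Phi_monic.leadingCoeff]
    intro h
    exact hPprime.ne_top ((Ideal.eq_top_iff_one _).mpr h)
  · intro n hn
    rw [Phi_degree] at hn
    have hn' : n < p - 1 := by exact_mod_cast hn
    rw [Phi_coeff]
    exact Ideal.mem_span_singleton.mpr
      (Nat.cast_dvd_cast ((Fact.out : p.Prime).dvd_choose_self (by omega) (by omega)))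
  · rw [Phi_degree]
    have : 0 < p - 1 := by have := hp1 (p := p); omega
    exact_mod_cast this
  · rw [Phi_coeff, Nat.choose_one_right, Ideal.span_singleton_pow]
    intro h
    obtain ⟨x, hx⟩ := Ideal.mem_span_singleton.mp h
    have hp0 : (p:ℤ_[p]) ≠ 0 := hprime.ne_zero
    have h1 : (1 : ℤ_[p]) = (p:ℤ_[p]) * x := by
      rw [pow_two, mul_assoc] at hx
      exact mul_left_cancel₀ hp0 (by rw [mul_one]; exact hx)
    exact p_not_unit (IsUnit.of_mul_eq_one _ h1.symm)
  · exact Phi_monic.isPrimitive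

lemma Phi_aeval (hθ : IsPrimitiveRoot θ p) : aeval (θ - 1) (Phi p) = 0 := by
  rw [Phi]
  simp only [map_sum, map_pow, map_add, aeval_X, aeval_one, sub_add_cancel]
  exact geom_theta hθ

lemma kappa_isIntegral (hθ : IsPrimitiveRoot θ p) : IsIntegral ℤ_[p] (θ - 1) :=
  (mem_integralClosure_iff _ _).mp (kappa_mem hθ)

lemma minpoly_kappa (hθ : IsPrimitiveRoot θ p) : minpoly ℤ_[p] (θ - 1) = Phi p := by
  have hkint := kappa_isIntegral hθ
  have hQirr : Irreducible ((Phi p).map (algebraMap ℤ_[p] ℚ_[p])) :=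
    (Phi_monic.irreducible_iff_irreducible_map_fraction_map).mp Phi_irreducible
  have hminQ : minpoly ℚ_[p] (θ - 1) = (Phi p).map (algebraMap ℤ_[p] ℚ_[p]) :=
    (minpoly.eq_of_irreducible_of_monic hQirr
      (by rw [aeval_map_algebraMap]; exact Phi_aeval hθ) (Phi_monic.map _)).symm
  have h2 : minpoly ℚ_[p] (θ - 1) = (minpoly ℤ_[p] (θ - 1)).map (algebraMap ℤ_[p] ℚ_[p]) :=
    minpoly.isIntegrallyClosed_eq_field_fractions' _ hkint
  have h3 := h2.symm.trans hminQ
  exact Polynomial.map_injective _ (IsFractionRing.injective ℤ_[p] ℚ_[p]) h3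

lemma minpoly_kappa_eisenstein (hθ : IsPrimitiveRoot θ p) :
    (minpoly ℤ_[p] (θ - 1)).IsEisensteinAt (Submodule.span ℤ_[p] {(p : ℤ_[p])}) := by
  rw [minpoly_kappa hθ]
  constructor
  · rw [Phi_monic.leadingCoeff]
    intro h
    have hprime : Prime (p : ℤ_[p]) := PadicInt.prime_p
    have hPprime : Ideal.IsPrime (Ideal.span {(p : ℤ_[p])}) :=
      (Ideal.span_singleton_prime hprime.ne_zero).mpr hprime
    exact hPprime.ne_top ((Ideal.eq_top_iff_one _).mpr h)
  · intro n hn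
    rw [Phi_natDegree] at hn
    rw [Phi_coeff]
    exact Ideal.mem_span_singleton.mpr
      (Nat.cast_dvd_cast ((Fact.out : p.Prime).dvd_choose_self (by omega) (by omega)))
  · rw [Phi_coeff, Nat.choose_one_right]
    show (p : ℤ_[p]) ∉ Ideal.span {(p:ℤ_[p])} ^ 2
    rw [Ideal.span_singleton_pow]
    intro h
    obtain ⟨x, hx⟩ := Ideal.mem_span_singleton.mp h
    have hp0 : (p:ℤ_[p]) ≠ 0 := (PadicInt.prime_p).ne_zero
    have h1 : (1 : ℤ_[p]) = (p:ℤ_[p]) * x := by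
      rw [pow_two, mul_assoc] at hx
      exact mul_left_cancel₀ hp0 (by rw [mul_one]; exact hx)
    exact p_not_unit (IsUnit.of_mul_eq_one _ h1.symm)

lemma adjoin_kappa_top (hθ : IsPrimitiveRoot θ p) (hgen : Algebra.adjoin ℚ_[p] {θ} = ⊤) :
    Algebra.adjoin ℚ_[p] {θ - 1} = ⊤ := by
  refine top_unique ?_
  rw [← hgen]
  apply Algebra.adjoin_le
  intro x hx
  rw [Set.mem_singleton_iff] at hx
  rw [hx]
  have hmem : (θ - 1) + 1 ∈ Algebra.adjoin ℚ_[p] {θ - 1} :=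
    add_mem (Algebra.subset_adjoin rfl) (one_mem _)
  simpa using hmem

lemma exists_den (q : ℚ_[p]) : ∃ (n : ℕ) (c : ℤ_[p]),
    algebraMap ℤ_[p] ℚ_[p] c = (p:ℚ_[p])^n * q := by
  obtain ⟨n, hn⟩ := exists_nat_ge ‖q‖
  have hn2 : ‖q‖ ≤ (p:ℝ)^n := by
    refine le_trans hn ?_
    have h1 : n ≤ p ^ n := (Nat.lt_pow_self (n := n) hp1).le
    exact_mod_cast h1
  have hnorm : ‖(p:ℚ_[p])^n * q‖ ≤ 1 := by
    rw [norm_mul, norm_pow, Padic.norm_p]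
    have hp0 : 0 < p := lt_trans Nat.zero_lt_one hp1
    have hp0' : (0:ℝ) < (p:ℝ) := by exact_mod_cast hp0
    have hppos : (0:ℝ) < (p:ℝ)^n := by positivity
    rw [inv_pow]
    rw [inv_mul_le_iff₀ hppos]
    simpa using hn2
  exact ⟨n, ⟨(p:ℚ_[p])^n * q, hnorm⟩, rfl⟩

lemma exists_poly_den (Q : ℚ_[p][X]) : ∃ (n : ℕ) (Q' : ℤ_[p][X]),
    Q'.map (algebraMap ℤ_[p] ℚ_[p]) = C ((p:ℚ_[p])^n) * Q := by
  induction Q using Polynomial.induction_on' with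
  | add f g hf hg =>
    obtain ⟨nf, Qf, hQF⟩ := hf
    obtain ⟨ng, Qg, hQG⟩ := hg
    refine ⟨nf + ng, C ((p:ℤ_[p])^ng) * Qf + C ((p:ℤ_[p])^nf) * Qg, ?_⟩
    rw [Polynomial.map_add, Polynomial.map_mul, Polynomial.map_mul, map_C, map_C,
      hQF, hQG, pow_add]
    simp only [map_pow, map_natCast, C_mul, C_pow]
    ring
  | monomial m a =>
    obtain ⟨n, c, hc⟩ := exists_den a
    refine ⟨n, C c * X^m, ?_⟩
    rw [Polynomial.map_mul, map_C, hc, Polynomial.map_pow, map_X,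
      ← Polynomial.C_mul_X_pow_eq_monomial, ← mul_assoc, ← C_mul]

lemma RO_eq_adjoin (hθ : IsPrimitiveRoot θ p) (hgen : Algebra.adjoin ℚ_[p] {θ} = ⊤)
    (hp5 : 5 ≤ p) : RO p K = Algebra.adjoin ℤ_[p] {θ - 1} := by
  have hkint := kappa_isIntegral hθ
  have hadj := adjoin_kappa_top hθ hgen
  have hkintQ : IsIntegral ℚ_[p] (θ - 1) := hkint.tower_top
  set B : PowerBasis ℚ_[p] K :=
    (Algebra.adjoin.powerBasis hkintQ).map
      ((Subalgebra.equivOfEq _ _ hadj).trans Subalgebra.topEquiv) with hB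
  have hBgen : B.gen = θ - 1 := by
    simp [hB, PowerBasis.map, Algebra.adjoin.powerBasis]
  haveI : CharZero K := charZero_of_injective_algebraMap (algebraMap ℚ_[p] K).injective
  haveI : Module.Finite ℚ_[p] K := B.finite
  haveI : Algebra.IsSeparable ℚ_[p] K := inferInstance
  refine le_antisymm ?_ (Algebra.adjoin_le ?_)
  · intro z hz
    have hzint : IsIntegral ℤ_[p] z := (mem_integralClosure_iff _ _).mp hz
    have hzmem : z ∈ Algebra.adjoin ℚ_[p] {θ - 1} := hadj ▸ Algebra.mem_top
    rw [Algebra.adjoin_singleton_eq_range_aeval] at hzmem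
    obtain ⟨Q, hQ⟩ := hzmem
    obtain ⟨n, Q', hQ'⟩ := exists_poly_den Q
    have hz2 : (p:ℤ_[p])^n • z ∈ Algebra.adjoin ℤ_[p] {θ - 1} := by
      have h1 : aeval (θ-1) (Q'.map (algebraMap ℤ_[p] ℚ_[p])) = aeval (θ-1) Q' := by
        rw [aeval_map_algebraMap]
      have hQ2 : aeval (θ - 1) Q = z := hQ
      rw [hQ', map_mul, aeval_C, hQ2] at h1
      have h2 : (p:ℤ_[p])^n • z = aeval (θ-1) Q' := by
        rw [Algebra.smul_def, IsScalarTower.algebraMap_apply ℤ_[p] ℚ_[p] K]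
        rw [map_pow, map_natCast, ← h1]
      rw [h2, Algebra.adjoin_singleton_eq_range_aeval]
      exact ⟨Q', rfl⟩
    have := mem_adjoin_of_smul_prime_pow_smul_of_minpoly_isEisensteinAt
      (B := B) PadicInt.prime_p (hBgen ▸ hkint) hzint (hBgen ▸ hz2)
      (hBgen ▸ minpoly_kappa_eisenstein hθ)
    rwa [hBgen] at this
  · intro x hx
    rw [Set.mem_singleton_iff] at hx
    subst hx
    exact kappa_mem hθ

end Stmt10Aux

namespace Stmt10Aux

open Polynomial Finset

variable {p : ℕ} [Fact p.Prime] {K : Type} [Field K] [Algebra ℚ_[p] K] [Algebra ℤ_[p] K]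
  [IsScalarTower ℤ_[p] ℚ_[p] K] {θ : K}

lemma p_mul_kappa_inv_mem (hθ : IsPrimitiveRoot θ p) (hp5 : 5 ≤ p) :
    (p:K) * (θ-1)⁻¹ ∈ RO p K := by
  obtain ⟨vK, wK, hv, hw, hvw, hp⟩ := exists_unit_p hθ hp5
  have hk := kappa_ne_zero hθ
  have : (p:K) * (θ-1)⁻¹ = (θ-1)^(p-2) * vK := by
    rw [hp, show p - 1 = (p-2) + 1 by omega, pow_succ]
    field_simp
  rw [this]
  exact mul_mem (pow_mem (kappa_mem hθ) _) hv

set_option maxHeartbeats 1000000 in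
set_option synthInstance.maxHeartbeats 400000 in
lemma exists_inv (hθ : IsPrimitiveRoot θ p) (hgen : Algebra.adjoin ℚ_[p] {θ} = ⊤)
    (hp5 : 5 ≤ p) {t : K} (ht : t ∈ RO p K) (hnd : (θ-1)⁻¹ * t ∉ RO p K) :
    ∃ t' ∈ RO p K, t * t' = 1 := by
  have hk := kappa_ne_zero hθ
  obtain ⟨vK, wK, hv, hw, hvw, hp⟩ := exists_unit_p hθ hp5
  have hadj := RO_eq_adjoin hθ hgen hp5
  have ht' := ht
  rw [hadj, Algebra.adjoin_singleton_eq_range_aeval] at ht'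
  obtain ⟨P, hP⟩ := ht'
  have hP' : aeval (θ-1) P = t := hP
  set c₀ := P.coeff 0 with hc0
  set y := aeval (θ-1) P.divX with hy
  have hymem : y ∈ RO p K := by
    rw [hadj, Algebra.adjoin_singleton_eq_range_aeval]; exact ⟨P.divX, rfl⟩
  have ht_eq : t = (θ-1) * y + algebraMap ℤ_[p] K c₀ := by
    rw [← hP']
    conv_lhs => rw [← X_mul_divX_add P]
    rw [map_add, map_mul, aeval_X, aeval_C]
  have hc0unit : IsUnit c₀ := by
    by_contra hcu
    have hlt : ‖c₀‖ < 1 := PadicInt.not_isUnit_iff.mp hcu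
    obtain ⟨c₁, hc1⟩ := (PadicInt.norm_lt_one_iff_dvd _).mp hlt
    apply hnd
    have heq : (θ-1)⁻¹ * t = y + algebraMap ℤ_[p] K c₁ * ((p:K) * (θ-1)⁻¹) := by
      rw [ht_eq, hc1, map_mul, map_natCast]
      field_simp
    rw [heq]
    exact add_mem hymem (mul_mem (Subalgebra.algebraMap_mem _ c₁)
      (p_mul_kappa_inv_mem hθ hp5))
  obtain ⟨cu, hcu⟩ := hc0unit
  set cinv : K := algebraMap ℤ_[p] K ((cu⁻¹ : ℤ_[p]ˣ) : ℤ_[p]) with hcinv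
  set s : K := (θ-1) * (y * cinv) with hs
  have hcinvmem : cinv ∈ RO p K := Subalgebra.algebraMap_mem _ _
  have hsmem : s ∈ RO p K := mul_mem (kappa_mem hθ) (mul_mem hymem hcinvmem)
  have hccinv : algebraMap ℤ_[p] K c₀ * cinv = 1 := by
    rw [hcinv, ← map_mul, ← hcu]
    simp
  have hunit : ∃ u' ∈ RO p K, (1 + s) * u' = 1 := by
    by_contra hnu
    push_neg at hnu
    haveI : Nontrivial ↥(RO p K) :=
      nontrivial_of_ne 0 1 (fun h => zero_ne_one (congrArg Subtype.val h))
    have h1s : (1 + s) ∈ RO p K := add_mem (one_mem _) hsmem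
    have hEnonunit : (⟨1 + s, h1s⟩ : ↥(RO p K)) ∈ nonunits ↥(RO p K) := by
      intro hE
      obtain ⟨U, hU⟩ := hE
      apply hnu ((U⁻¹ : Units ↥(RO p K)) : ↥(RO p K))
        ((U⁻¹ : Units ↥(RO p K)) : ↥(RO p K)).2
      have : (U : ↥(RO p K)) * ((U⁻¹ : Units ↥(RO p K)) : ↥(RO p K)) = 1 := U.mul_inv
      have hK := congrArg Subtype.val this
      rw [hU] at hK
      exact hK
    obtain ⟨m, hm, hEm⟩ := exists_max_ideal_of_mem_nonunits hEnonunit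
    haveI := hm
    haveI : Algebra.IsIntegral ℤ_[p] ↥(RO p K) :=
      (inferInstance : Algebra.IsIntegral ℤ_[p] ↥(integralClosure ℤ_[p] K))
    have hcomap : (m.comap (algebraMap ℤ_[p] ↥(RO p K))).IsMaximal :=
      Ideal.isMaximal_comap_of_isIntegral_of_isMaximal m
    have hcm : m.comap (algebraMap ℤ_[p] ↥(RO p K)) = IsLocalRing.maximalIdeal ℤ_[p] :=
      IsLocalRing.eq_maximalIdeal hcomap
    have hpmem : ((p:ℕ) : ↥(RO p K)) ∈ m := by
      have h2 : (p:ℤ_[p]) ∈ m.comap (algebraMap ℤ_[p] ↥(RO p K)) := by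
        rw [hcm]
        exact p_not_unit
      have h3 : algebraMap ℤ_[p] ↥(RO p K) (p:ℤ_[p]) ∈ m := h2
      rwa [map_natCast] at h3
    set kO : ↥(RO p K) := ⟨θ - 1, kappa_mem hθ⟩ with hkO
    have hkpow : kO ^ (p-1) ∈ m := by
      have hval : kO ^ (p-1) = ((p:ℕ) : ↥(RO p K)) * ⟨wK, hw⟩ := by
        apply Subtype.ext
        push_cast [hkO]
        rw [hp]
        linear_combination (-(θ-1)^(p-1)) * hvw
      rw [hval]
      exact Ideal.mul_mem_right _ _ hpmem
    have hkm : kO ∈ m := (hm.isPrime).mem_of_pow_mem _ hkpow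
    have hsm : (⟨s, hsmem⟩ : ↥(RO p K)) ∈ m := by
      have : (⟨s, hsmem⟩ : ↥(RO p K)) = kO * ⟨y * cinv, mul_mem hymem hcinvmem⟩ := by
        apply Subtype.ext
        simp [hs, hkO]
      rw [this]
      exact Ideal.mul_mem_right _ _ hkm
    have h1m : (1 : ↥(RO p K)) ∈ m := by
      have : (1 : ↥(RO p K)) = ⟨1 + s, h1s⟩ - ⟨s, hsmem⟩ := by
        apply Subtype.ext
        simp
      rw [this]
      exact Ideal.sub_mem _ hEm hsm
    exact hm.ne_top ((Ideal.eq_top_iff_one _).mpr h1m)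
  obtain ⟨u', hu', huu⟩ := hunit
  refine ⟨cinv * u', mul_mem hcinvmem hu', ?_⟩
  have hts : t = algebraMap ℤ_[p] K c₀ * (1 + s) := by
    rw [ht_eq, hs, mul_add, mul_one]
    have h4 : algebraMap ℤ_[p] K c₀ * ((θ-1) * (y * cinv))
        = (algebraMap ℤ_[p] K c₀ * cinv) * ((θ-1) * y) := by ring
    rw [h4, hccinv, one_mul]
    ring
  rw [hts]
  calc algebraMap ℤ_[p] K c₀ * (1 + s) * (cinv * u')
      = (algebraMap ℤ_[p] K c₀ * cinv) * ((1 + s) * u') := by ring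
    _ = 1 := by rw [hccinv, huu, one_mul]

end Stmt10Aux

namespace Stmt10Aux

open Polynomial Finset

variable {p : ℕ} [Fact p.Prime] {K : Type} [Field K] [Algebra ℚ_[p] K] [Algebra ℤ_[p] K]
  [IsScalarTower ℤ_[p] ℚ_[p] K] {θ : K} {i : ℕ} {γ : K → K → K}
  {ρf : ℕ → ℕ → ℤ} {ρ : ℤ} {A : ℤ → ℤ → ℕ}

/-- the workhorse: `γ(𝔭^a, 𝔭^b) ⊆ 𝔭^(a+b+ρ)` for all `a, b ≥ i`. -/
lemma gamma_mem_Pp (hθ : IsPrimitiveRoot θ p)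
    (hρf : ∀ j k : ℕ, i ≤ j → i ≤ k →
      Submodule.span ℤ_[p] {w : K | ∃ x ∈ Pp p K θ j, ∃ y ∈ Pp p K θ k, γ x y = w}
        = Pp p K θ ((j : ℤ) + k + ρf j k))
    (hρ : IsLeast {z : ℤ | ∃ j k : ℕ, i ≤ j ∧ i ≤ k ∧ ρf j k = z} ρ)
    {a b : ℤ} (ha : (i:ℤ) ≤ a) (hb : (i:ℤ) ≤ b) {x y : K}
    (hx : x ∈ Pp p K θ a) (hy : y ∈ Pp p K θ b) : γ x y ∈ Pp p K θ (a + b + ρ) := by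
  have ha0 : 0 ≤ a := le_trans (Int.ofNat_nonneg i) ha
  have hb0 : 0 ≤ b := le_trans (Int.ofNat_nonneg i) hb
  have hai : i ≤ a.toNat := by omega
  have hbi : i ≤ b.toNat := by omega
  have haa : ((a.toNat : ℕ) : ℤ) = a := Int.toNat_of_nonneg ha0
  have hbb : ((b.toNat : ℕ) : ℤ) = b := Int.toNat_of_nonneg hb0
  have hspan := hρf a.toNat b.toNat hai hbi
  have hmem : γ x y ∈ Submodule.span ℤ_[p]
      {w : K | ∃ x ∈ Pp p K θ a.toNat, ∃ y ∈ Pp p K θ b.toNat, γ x y = w} := by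
    apply Submodule.subset_span
    exact ⟨x, by rw [haa]; exact hx, y, by rw [hbb]; exact hy, rfl⟩
  rw [hspan] at hmem
  have hle : a + b + ρ ≤ (a.toNat : ℤ) + b.toNat + ρf a.toNat b.toNat := by
    have : ρ ≤ ρf a.toNat b.toNat := hρ.2 ⟨a.toNat, b.toNat, hai, hbi, rfl⟩
    omega
  exact Pp_mono hθ hle hmem

lemma gamma_antisym (hγ : MemH p K θ i γ) {x y : K}
    (hx : x ∈ Pp p K θ i) (hy : y ∈ Pp p K θ i) : γ y x = - γ x y := by
  have h := hγ.alternating (x+y) (add_mem hx hy)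
  rw [hγ.add_left x hx y hy (x+y) (add_mem hx hy),
    hγ.add_right x hx x hx y hy, hγ.add_right y hy x hx y hy,
    hγ.alternating x hx, hγ.alternating y hy] at h
  linear_combination h

lemma kappa_zpow_mem_i (hθ : IsPrimitiveRoot θ p) {a : ℤ} (ha : (i:ℤ) ≤ a) :
    (θ - 1) ^ a ∈ Pp p K θ (i:ℤ) := zpow_mem_Pp hθ ha

lemma maps_into' (hθ : IsPrimitiveRoot θ p) (hγ : MemH p K θ i γ) {x y : K}
    (hx : x ∈ Pp p K θ i) (hy : y ∈ Pp p K θ i) : γ x y ∈ Pp p K θ (2*(i:ℤ) + 1) := by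
  exact hγ.maps_into x hx y hy

/-- `A j j ≡ 0`. -/
lemma A_diag (hθ : IsPrimitiveRoot θ p) (hp5 : 5 ≤ p) (hγ : MemH p K θ i γ)
    (hA : ∀ j k : ℤ, (i : ℤ) ≤ j → (i : ℤ) ≤ k → A j k < p ∧
      γ ((θ - 1) ^ j) ((θ - 1) ^ k) - (A j k : K) * (θ - 1) ^ (j + k + ρ)
        ∈ Pp p K θ (j + k + ρ + 1))
    {j : ℤ} (hj : (i:ℤ) ≤ j) : A j j = 0 := by
  have h := (hA j j hj hj).2
  rw [hγ.alternating _ (kappa_zpow_mem_i hθ hj), zero_sub] at h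
  have h2 := Submodule.neg_mem _ h
  rw [neg_neg] at h2
  have hdvd : p ∣ A j j := nat_dvd_of_mem hθ hp5 h2
  exact Nat.eq_zero_of_dvd_of_lt hdvd (hA j j hj hj).1

/-- `A j k + A k j ≡ 0 mod p`. -/
lemma A_antisym (hθ : IsPrimitiveRoot θ p) (hp5 : 5 ≤ p) (hγ : MemH p K θ i γ)
    (hA : ∀ j k : ℤ, (i : ℤ) ≤ j → (i : ℤ) ≤ k → A j k < p ∧
      γ ((θ - 1) ^ j) ((θ - 1) ^ k) - (A j k : K) * (θ - 1) ^ (j + k + ρ)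
        ∈ Pp p K θ (j + k + ρ + 1))
    {j k : ℤ} (hj : (i:ℤ) ≤ j) (hk : (i:ℤ) ≤ k) : p ∣ A j k + A k j := by
  have h1 := (hA j k hj hk).2
  have h2 := (hA k j hk hj).2
  have e : k + j + ρ = j + k + ρ := by ring
  rw [e] at h2
  have h3 := Submodule.add_mem _ h1 h2
  rw [gamma_antisym hγ (kappa_zpow_mem_i hθ hj) (kappa_zpow_mem_i hθ hk)] at h3
  have h4 := Submodule.neg_mem _ h3
  have h5 : -(γ ((θ-1)^j) ((θ-1)^k) - (A j k : K) * (θ-1)^(j+k+ρ)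
      + (-γ ((θ-1)^j) ((θ-1)^k) - (A k j : K) * (θ-1)^(j+k+ρ)))
      = ((A j k + A k j : ℕ) : K) * (θ-1)^(j+k+ρ) := by
    push_cast
    ring
  rw [h5] at h4
  exact nat_dvd_of_mem hθ hp5 h4

/-- If `A j k ≠ 0` then `j + k + ρ ≥ 2i+1`. -/
lemma A_lower (hθ : IsPrimitiveRoot θ p) (hp5 : 5 ≤ p) (hγ : MemH p K θ i γ)
    (hA : ∀ j k : ℤ, (i : ℤ) ≤ j → (i : ℤ) ≤ k → A j k < p ∧
      γ ((θ - 1) ^ j) ((θ - 1) ^ k) - (A j k : K) * (θ - 1) ^ (j + k + ρ)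
        ∈ Pp p K θ (j + k + ρ + 1))
    {j k : ℤ} (hj : (i:ℤ) ≤ j) (hk : (i:ℤ) ≤ k) (hne : A j k ≠ 0) :
    2*(i:ℤ) + 1 ≤ j + k + ρ := by
  by_contra hcon
  push_neg at hcon
  have h1 := (hA j k hj hk).2
  have h2 : γ ((θ-1)^j) ((θ-1)^k) ∈ Pp p K θ (j+k+ρ+1) :=
    Pp_mono hθ (by omega) (maps_into' hθ hγ (kappa_zpow_mem_i hθ hj) (kappa_zpow_mem_i hθ hk))
  have h3 := Submodule.sub_mem _ h2 h1
  have h4 : γ ((θ-1)^j) ((θ-1)^k) - (γ ((θ-1)^j) ((θ-1)^k)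
      - (A j k : K) * (θ-1)^(j+k+ρ)) = (A j k : K) * (θ-1)^(j+k+ρ) := by ring
  rw [h4] at h3
  have hdvd := nat_dvd_of_mem hθ hp5 h3
  exact hne (Nat.eq_zero_of_dvd_of_lt hdvd (hA j k hj hk).1)

end Stmt10Aux

namespace Stmt10Aux

open Polynomial Finset

variable {p : ℕ} [Fact p.Prime] {K : Type} [Field K] [Algebra ℚ_[p] K] [Algebra ℤ_[p] K]
  [IsScalarTower ℤ_[p] ℚ_[p] K] {θ : K} {i : ℕ} {γ : K → K → K}
  {ρf : ℕ → ℕ → ℤ} {ρ : ℤ} {A : ℤ → ℤ → ℕ}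

/-- The key estimate for a single term of the Jacobi sum. -/
lemma Tterm (hθ : IsPrimitiveRoot θ p) (hp5 : 5 ≤ p) (hγ : MemH p K θ i γ)
    (hρf : ∀ j k : ℕ, i ≤ j → i ≤ k →
      Submodule.span ℤ_[p] {w : K | ∃ x ∈ Pp p K θ j, ∃ y ∈ Pp p K θ k, γ x y = w}
        = Pp p K θ ((j : ℤ) + k + ρf j k))
    (hρ : IsLeast {z : ℤ | ∃ j k : ℕ, i ≤ j ∧ i ≤ k ∧ ρf j k = z} ρ)
    (hA : ∀ j k : ℤ, (i : ℤ) ≤ j → (i : ℤ) ≤ k → A j k < p ∧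
      γ ((θ - 1) ^ j) ((θ - 1) ^ k) - (A j k : K) * (θ - 1) ^ (j + k + ρ)
        ∈ Pp p K θ (j + k + ρ + 1))
    {a b c : ℤ} (ha : (i:ℤ) ≤ a) (hb : (i:ℤ) ≤ b) (hc : (i:ℤ) ≤ c) :
    γ (γ ((θ-1)^a) ((θ-1)^b)) ((θ-1)^c)
      - ((A a b * A (a+b+ρ) c : ℕ) : K) * (θ-1)^(a+b+c+2*ρ)
      ∈ Pp p K θ (a+b+c+2*ρ+1) := by
  have hκa : (θ-1)^a ∈ Pp p K θ (i:ℤ) := kappa_zpow_mem_i hθ ha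
  have hκb : (θ-1)^b ∈ Pp p K θ (i:ℤ) := kappa_zpow_mem_i hθ hb
  have hκc : (θ-1)^c ∈ Pp p K θ (i:ℤ) := kappa_zpow_mem_i hθ hc
  have hκcc : (θ-1)^c ∈ Pp p K θ c := zpow_mem_Pp hθ le_rfl
  have hi0 : (0:ℤ) ≤ (i:ℤ) := Int.ofNat_nonneg i
  by_cases hab : A a b = 0
  · -- in this case the whole first factor already has high valuation
    have h1 := (hA a b ha hb).2
    rw [hab] at h1
    simp only [Nat.cast_zero, zero_mul, sub_zero] at h1
    -- `γ κ^a κ^b ∈ Pp (max (a+b+ρ+1) (2i+1))`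
    set M : ℤ := max (a+b+ρ+1) (2*(i:ℤ)+1) with hM
    have h2 : γ ((θ-1)^a) ((θ-1)^b) ∈ Pp p K θ M := by
      rcases max_cases (a+b+ρ+1) (2*(i:ℤ)+1) with ⟨heq, -⟩ | ⟨heq, -⟩
      · rw [hM, heq]; exact h1
      · rw [hM, heq]; exact maps_into' hθ hγ hκa hκb
    have hMi : (i:ℤ) ≤ M := by
      have : 2*(i:ℤ)+1 ≤ M := le_max_right _ _
      omega
    have h3 : γ (γ ((θ-1)^a) ((θ-1)^b)) ((θ-1)^c) ∈ Pp p K θ (M + c + ρ) :=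
      gamma_mem_Pp hθ hρf hρ hMi hc h2 hκcc
    have h4 : a+b+c+2*ρ+1 ≤ M + c + ρ := by
      have : a+b+ρ+1 ≤ M := le_max_left _ _
      omega
    have h5 := Pp_mono hθ h4 h3
    rw [hab]
    simp only [zero_mul, Nat.cast_zero, sub_zero]
    simpa using h5
  · -- main case
    have hm : 2*(i:ℤ)+1 ≤ a+b+ρ := A_lower hθ hp5 hγ hA ha hb hab
    have hmi : (i:ℤ) ≤ a+b+ρ := by omega
    have h1 := (hA a b ha hb).2
    have h2 := (hA (a+b+ρ) c hmi hc).2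
    rw [show a+b+ρ+c+ρ = a+b+c+2*ρ by ring] at h2
    -- decompose the first argument
    set ε₁ : K := γ ((θ-1)^a) ((θ-1)^b) - (A a b : K) * (θ-1)^(a+b+ρ) with hε₁
    have hε₁mem : ε₁ ∈ Pp p K θ (a+b+ρ+1) := h1
    have hsmulK : ((A a b : ℤ_[p]) : ℤ_[p]) • ((θ-1)^(a+b+ρ)) = (A a b : K) * (θ-1)^(a+b+ρ) := by
      rw [Algebra.smul_def, map_natCast]
    have hsplit : γ ((θ-1)^a) ((θ-1)^b)
        = (A a b : ℤ_[p]) • ((θ-1)^(a+b+ρ)) + ε₁ := by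
      rw [hsmulK, hε₁]; ring
    have hκm : (θ-1)^(a+b+ρ) ∈ Pp p K θ (i:ℤ) := kappa_zpow_mem_i hθ hmi
    have hsm : (A a b : ℤ_[p]) • ((θ-1)^(a+b+ρ)) ∈ Pp p K θ (i:ℤ) :=
      Submodule.smul_mem _ _ hκm
    have hε₁i : ε₁ ∈ Pp p K θ (i:ℤ) := Pp_mono hθ (by omega) hε₁mem
    have hexp : γ (γ ((θ-1)^a) ((θ-1)^b)) ((θ-1)^c)
        = (A a b : ℤ_[p]) • γ ((θ-1)^(a+b+ρ)) ((θ-1)^c) + γ ε₁ ((θ-1)^c) := by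
      rw [hsplit, hγ.add_left _ hsm _ hε₁i _ hκc, hγ.smul_left _ _ hκm _ hκc]
    -- error terms
    have herr1 : γ ε₁ ((θ-1)^c) ∈ Pp p K θ (a+b+c+2*ρ+1) := by
      have h6 : γ ε₁ ((θ-1)^c) ∈ Pp p K θ ((a+b+ρ+1) + c + ρ) :=
        gamma_mem_Pp hθ hρf hρ (by omega) hc hε₁mem hκcc
      have h7 : (a+b+ρ+1) + c + ρ = a+b+c+2*ρ+1 := by ring
      rwa [h7] at h6
    set ε₂ : K := γ ((θ-1)^(a+b+ρ)) ((θ-1)^c) - (A (a+b+ρ) c : K) * (θ-1)^(a+b+c+2*ρ) with hε₂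
    have hε₂mem : ε₂ ∈ Pp p K θ (a+b+c+2*ρ+1) := h2
    have herr2 : (A a b : ℤ_[p]) • ε₂ ∈ Pp p K θ (a+b+c+2*ρ+1) := Submodule.smul_mem _ _ hε₂mem
    have hfinal := Submodule.add_mem _ herr2 herr1
    have heq : (A a b : ℤ_[p]) • ε₂ + γ ε₁ ((θ-1)^c)
        = γ (γ ((θ-1)^a) ((θ-1)^b)) ((θ-1)^c)
          - ((A a b * A (a+b+ρ) c : ℕ) : K) * (θ-1)^(a+b+c+2*ρ) := by
    -- expand
      rw [hexp, hε₂]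
      rw [Algebra.smul_def, map_natCast, Algebra.smul_def, map_natCast]
      push_cast
      ring
    rwa [heq] at hfinal

/-- Jacobi elements live in `𝔭^(2i+1)`. -/
lemma Jg_mem (hθ : IsPrimitiveRoot θ p) (hγ : MemH p K θ i γ) {u v w : K}
    (hu : u ∈ Pp p K θ i) (hv : v ∈ Pp p K θ i) (hw : w ∈ Pp p K θ i) :
    Jg K γ u v w ∈ Pp p K θ (2*(i:ℤ)+1) := by
  have hii : (i:ℤ) ≤ 2*(i:ℤ)+1 := by omega
  have h1 : γ u v ∈ Pp p K θ (i:ℤ) := Pp_mono hθ hii (maps_into' hθ hγ hu hv)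
  have h2 : γ v w ∈ Pp p K θ (i:ℤ) := Pp_mono hθ hii (maps_into' hθ hγ hv hw)
  have h3 : γ w u ∈ Pp p K θ (i:ℤ) := Pp_mono hθ hii (maps_into' hθ hγ hw hu)
  exact Submodule.add_mem _ (Submodule.add_mem _
    (maps_into' hθ hγ h1 hw) (maps_into' hθ hγ h2 hu)) (maps_into' hθ hγ h3 hv)

end Stmt10Aux


open Stmt10Aux

theorem stmt_10 (p : ℕ) [Fact p.Prime] (hp5 : 5 ≤ p)
    (K : Type) [Field K] [Algebra ℚ_[p] K] [Algebra ℤ_[p] K]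
    [IsScalarTower ℤ_[p] ℚ_[p] K]
    (θ : K) (hθ : IsPrimitiveRoot θ p)
    (hgen : Algebra.adjoin ℚ_[p] {θ} = ⊤)
    (i : ℕ) (γ : K → K → K) (hγ : MemHhat p K θ i γ)
    -- `ρ(j,k)` is defined by `γ(𝔭^j ∧ 𝔭^k) = 𝔭^(j+k+ρ(j,k))`
    (ρf : ℕ → ℕ → ℤ)
    (hρf : ∀ j k : ℕ, i ≤ j → i ≤ k →
      Submodule.span ℤ_[p] {w : K | ∃ x ∈ Pp p K θ j, ∃ y ∈ Pp p K θ k, γ x y = w}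
        = Pp p K θ ((j : ℤ) + k + ρf j k))
    -- the offset `ρ(γ) = min {ρ(j,k) | j, k ≥ i}`
    (ρ : ℤ) (hρ : IsLeast {z : ℤ | ∃ j k : ℕ, i ≤ j ∧ i ≤ k ∧ ρf j k = z} ρ)
    -- `a(j,k) ∈ {0,…,p-1}` is defined for `j, k ≥ i` by
    -- `γ(κ^j ∧ κ^k) ≡ a(j,k)·κ^(j+k+ρ) mod 𝔭^(j+k+ρ+1)`, and is extended to
    -- all integer arguments by periodicity `a(j+d,k) = a(j,k) = a(j,k+d)`
    (A : ℤ → ℤ → ℕ)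
    (hA : ∀ j k : ℤ, (i : ℤ) ≤ j → (i : ℤ) ≤ k → A j k < p ∧
      γ ((θ - 1) ^ j) ((θ - 1) ^ k) - (A j k : K) * (θ - 1) ^ (j + k + ρ)
        ∈ Pp p K θ (j + k + ρ + 1))
    (hAlt : ∀ j k : ℤ, A j k < p)
    (hAper : ∀ j k : ℤ, A (j + (p - 1)) k = A j k ∧ A j (k + (p - 1)) = A j k)
    -- `J(j,k,l) ∈ {0,…,p-1}` is defined by
    -- `J(j,k,l) ≡ a(j,k)a(j+k+ρ,l) + a(k,l)a(k+l+ρ,j) + a(l,j)a(l+j+ρ,k) mod p`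
    (JF : ℤ → ℤ → ℤ → ℕ)
    (hJF : ∀ j k l : ℤ, (i : ℤ) ≤ j → (i : ℤ) ≤ k → (i : ℤ) ≤ l →
      JF j k l < p ∧
      (JF j k l : ZMod p) = (A j k : ZMod p) * (A (j + k + ρ) l : ZMod p)
        + (A k l : ZMod p) * (A (k + l + ρ) j : ZMod p)
        + (A l j : ZMod p) * (A (l + j + ρ) k : ZMod p)) :
    -- if some `J(j,k,l)` with `j,k,l ∈ {i,…,i+d-1}` is nonzero, then `λ(γ)`
    -- is finite with `λ(γ) ≤ 3i + 3d - 6 + 2ρ`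
    (∃ j k l : ℤ, (i : ℤ) ≤ j ∧ j ≤ (i : ℤ) + (p - 1) - 1 ∧
      (i : ℤ) ≤ k ∧ k ≤ (i : ℤ) + (p - 1) - 1 ∧
      (i : ℤ) ≤ l ∧ l ≤ (i : ℤ) + (p - 1) - 1 ∧ JF j k l ≠ 0) →
    ∃ lam : ℕ, JIdealSet p K θ i γ = (Pp p K θ lam : Set K) ∧
      (lam : ℤ) ≤ 3 * i + 3 * ((p : ℤ) - 1) - 6 + 2 * ρ := by
  
  rintro ⟨j, k, l, hj1, hj2, hk1, hk2, hl1, hl2, hJ0⟩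
  classical
  have hγH := hγ.toMemH
  have hκ := kappa_ne_zero hθ
  -- `A` is antisymmetric mod `p`
  have hAeq : ∀ (a b : ℤ), (i:ℤ) ≤ a → (i:ℤ) ≤ b →
      ((A a b : ZMod p)) = - (A b a : ZMod p) := by
    intro a b ha hb
    have hdvd := A_antisym (ρ := ρ) hθ hp5 hγH hA ha hb
    have h0 : ((A a b + A b a : ℕ) : ZMod p) = 0 :=
      (ZMod.natCast_eq_zero_iff _ _).mpr hdvd
    push_cast at h0
    exact eq_neg_of_add_eq_zero_left h0
  -- `JF j k l ≠ 0` forces `j, k, l` pairwise distinct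
  have hJF_ne_zero : ∀ a b c : ℤ, (i:ℤ) ≤ a → (i:ℤ) ≤ b → (i:ℤ) ≤ c →
      (a = b ∨ b = c ∨ a = c) → JF a b c = 0 := by
    intro a b c ha hb hc hor
    have hform := (hJF a b c ha hb hc).2
    have hz : (JF a b c : ZMod p) = 0 := by
      rcases hor with rfl | rfl | rfl
      · rw [A_diag hθ hp5 hγH hA ha, hAeq a c ha hc,
          show c + a + ρ = a + c + ρ by ring] at hform
        rw [hform]; push_cast; ring
      · rw [A_diag hθ hp5 hγH hA hb, hAeq a b ha hb,
          show b + a + ρ = a + b + ρ by ring] at hform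
        rw [hform]; push_cast; ring
      · rw [A_diag hθ hp5 hγH hA ha, hAeq a b ha hb,
          show b + a + ρ = a + b + ρ by ring] at hform
        rw [hform]; push_cast; ring
    have hd := (ZMod.natCast_eq_zero_iff _ _).mp hz
    exact Nat.eq_zero_of_dvd_of_lt hd (hJF a b c ha hb hc).1
  have hjk : j ≠ k := fun h => hJ0 (hJF_ne_zero j k l hj1 hk1 hl1 (Or.inl h))
  have hkl : k ≠ l := fun h => hJ0 (hJF_ne_zero j k l hj1 hk1 hl1 (Or.inr (Or.inl h)))
  have hjl : j ≠ l := fun h => hJ0 (hJF_ne_zero j k l hj1 hk1 hl1 (Or.inr (Or.inr h)))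
  have hsum : j + k + l ≤ 3*(i:ℤ) + 3*((p:ℤ)-1) - 6 := by omega
  -- the key Jacobi element
  have T1 := Tterm hθ hp5 hγH hρf hρ hA hj1 hk1 hl1
  have T2 := Tterm hθ hp5 hγH hρf hρ hA hk1 hl1 hj1
  have T3 := Tterm hθ hp5 hγH hρf hρ hA hl1 hj1 hk1
  rw [show k+l+j+2*ρ = j+k+l+2*ρ by ring] at T2
  rw [show l+j+k+2*ρ = j+k+l+2*ρ by ring] at T3
  have hkey0 := Submodule.add_mem _ (Submodule.add_mem _ T1 T2) T3
  have hkey : Jg K γ ((θ-1)^j) ((θ-1)^k) ((θ-1)^l)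
      - ((A j k * A (j+k+ρ) l + A k l * A (k+l+ρ) j + A l j * A (l+j+ρ) k : ℕ) : K)
        * (θ-1)^(j+k+l+2*ρ) ∈ Pp p K θ (j+k+l+2*ρ+1) := by
    have heq : γ (γ ((θ-1)^j) ((θ-1)^k)) ((θ-1)^l)
          - ((A j k * A (j+k+ρ) l : ℕ) : K) * (θ-1)^(j+k+l+2*ρ)
        + (γ (γ ((θ-1)^k) ((θ-1)^l)) ((θ-1)^j)
          - ((A k l * A (k+l+ρ) j : ℕ) : K) * (θ-1)^(j+k+l+2*ρ))
        + (γ (γ ((θ-1)^l) ((θ-1)^j)) ((θ-1)^k)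
          - ((A l j * A (l+j+ρ) k : ℕ) : K) * (θ-1)^(j+k+l+2*ρ))
        = Jg K γ ((θ-1)^j) ((θ-1)^k) ((θ-1)^l)
          - ((A j k * A (j+k+ρ) l + A k l * A (k+l+ρ) j + A l j * A (l+j+ρ) k : ℕ) : K)
            * (θ-1)^(j+k+l+2*ρ) := by
      simp only [Jg]
      push_cast
      ring
    rwa [heq] at hkey0
  -- the coefficient is nonzero mod `p`
  have hSmod : ¬ p ∣ (A j k * A (j+k+ρ) l + A k l * A (k+l+ρ) j + A l j * A (l+j+ρ) k) := by
    intro hdvd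
    have hS0 : ((A j k * A (j+k+ρ) l + A k l * A (k+l+ρ) j + A l j * A (l+j+ρ) k : ℕ)
        : ZMod p) = 0 := (ZMod.natCast_eq_zero_iff _ _).mpr hdvd
    have hJFz : (JF j k l : ZMod p) = 0 := by
      rw [(hJF j k l hj1 hk1 hl1).2]
      push_cast at hS0
      linear_combination hS0
    have hd := (ZMod.natCast_eq_zero_iff _ _).mp hJFz
    exact hJ0 (Nat.eq_zero_of_dvd_of_lt hd (hJF j k l hj1 hk1 hl1).1)
  -- the Jacobi element is not in `𝔭^(N+1)`
  have hznot : Jg K γ ((θ-1)^j) ((θ-1)^k) ((θ-1)^l) ∉ Pp p K θ (j+k+l+2*ρ+1) := by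
    intro hmem
    have h1 := Submodule.sub_mem _ hmem hkey
    have h2 : Jg K γ ((θ-1)^j) ((θ-1)^k) ((θ-1)^l)
        - (Jg K γ ((θ-1)^j) ((θ-1)^k) ((θ-1)^l)
          - ((A j k * A (j+k+ρ) l + A k l * A (k+l+ρ) j + A l j * A (l+j+ρ) k : ℕ) : K)
            * (θ-1)^(j+k+l+2*ρ))
        = ((A j k * A (j+k+ρ) l + A k l * A (k+l+ρ) j + A l j * A (l+j+ρ) k : ℕ) : K)
            * (θ-1)^(j+k+l+2*ρ) := by ring
    rw [h2] at h1
    exact hSmod (nat_dvd_of_mem hθ hp5 h1)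
  have hz21 : Jg K γ ((θ-1)^j) ((θ-1)^k) ((θ-1)^l) ∈ Pp p K θ (2*(i:ℤ)+1) :=
    Jg_mem hθ hγH (kappa_zpow_mem_i hθ hj1) (kappa_zpow_mem_i hθ hk1)
      (kappa_zpow_mem_i hθ hl1)
  have hN : 2*(i:ℤ)+1 ≤ j+k+l+2*ρ := by
    by_contra hcon
    push_neg at hcon
    exact hznot (Pp_mono hθ (by omega) hz21)
  -- the exponent of the Jacobi ideal
  set good : ℕ → Prop := fun n => ∀ u ∈ Pp p K θ i, ∀ v ∈ Pp p K θ i, ∀ w ∈ Pp p K θ i,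
    Jg K γ u v w ∈ Pp p K θ (n:ℤ) with hgood_def
  have hgood21 : good (2*i+1) := by
    intro u hu v hv w hw
    have h := Jg_mem hθ hγH hu hv hw
    have he : ((2*i+1 : ℕ) : ℤ) = 2*(i:ℤ)+1 := by push_cast; ring
    rwa [he]
  set NN : ℕ := (j+k+l+2*ρ).toNat with hNN
  have h21NN : 2*i+1 ≤ NN := by omega
  set lam : ℕ := Nat.findGreatest good NN with hlam
  have hglam : good lam := Nat.findGreatest_spec h21NN hgood21
  have hlamle : lam ≤ NN := Nat.findGreatest_le NN
  have hnot : ¬ good (lam+1) := by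
    by_cases hcase : lam + 1 ≤ NN
    · exact Nat.findGreatest_is_greatest (by omega) hcase
    · intro hgd
      have h := hgd _ (kappa_zpow_mem_i hθ hj1) _ (kappa_zpow_mem_i hθ hk1)
        _ (kappa_zpow_mem_i hθ hl1)
      have hcast : ((lam+1:ℕ):ℤ) = j+k+l+2*ρ + 1 := by omega
      rw [hcast] at h
      exact hznot h
  refine ⟨lam, ?_, by omega⟩
  ext x
  simp only [SetLike.mem_coe]
  constructor
  · rintro ⟨n, cf, sf, hcf, hsf, rfl⟩
    apply Submodule.sum_mem
    intro t _
    obtain ⟨u, hu, v, hv, w, hw, hst⟩ := hsf t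
    have h1 : sf t ∈ Pp p K θ (lam:ℤ) := hst ▸ hglam u hu v hv w hw
    exact O_mul_mem_Pp (hcf t) h1
  · intro hx
    have hnot' : ¬ (∀ u ∈ Pp p K θ i, ∀ v ∈ Pp p K θ i, ∀ w ∈ Pp p K θ i,
        Jg K γ u v w ∈ Pp p K θ ((lam+1 : ℕ):ℤ)) := hnot
    push_neg at hnot'
    obtain ⟨u, hu, v, hv, w, hw, hnm⟩ := hnot'
    have hs0 : Jg K γ u v w ∈ Pp p K θ (lam:ℤ) := hglam u hu v hv w hw
    have ht : (θ-1)^(-(lam:ℤ)) * Jg K γ u v w ∈ RO p K := hs0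
    have htn : (θ-1)⁻¹ * ((θ-1)^(-(lam:ℤ)) * Jg K γ u v w) ∉ RO p K := by
      intro hmm
      apply hnm
      show (θ-1)^(-((lam+1:ℕ):ℤ)) * Jg K γ u v w ∈ RO p K
      have he : (θ-1)^(-((lam+1:ℕ):ℤ)) = (θ-1)⁻¹ * (θ-1)^(-(lam:ℤ)) := by
        rw [← zpow_neg_one, ← zpow_add₀ hκ]
        congr 1
        push_cast
        ring
      rw [he, mul_assoc]
      exact hmm
    obtain ⟨t', ht', htt'⟩ := exists_inv hθ hgen hp5 ht htn
    refine ⟨1, ![(θ-1)^(-(lam:ℤ)) * x * t'], ![Jg K γ u v w], ?_, ?_, ?_⟩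
    · intro t
      simp only [Matrix.cons_val_fin_one]
      exact mul_mem hx ht'
    · intro t
      exact ⟨u, hu, v, hv, w, hw, by simp⟩
    · rw [Fin.sum_univ_one]
      simp only [Matrix.cons_val_zero]
      have h9 : (θ-1)^(-(lam:ℤ)) * x * t' * Jg K γ u v w
          = x * ((θ-1)^(-(lam:ℤ)) * Jg K γ u v w * t') := by ring
      rw [h9, htt', mul_one]
end
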